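/- arXiv:1207.0116 — 6 statements merged into one kernel-verified Lean document; each statement's English description precedes it below -/
import Mathlib

section
/- Let d ≥ 2 and 1 ≤ κ < d be coprime integers and set ζ = e^{2πiκ/d}. Let f be a nonzero polynomial in one variable q with real coefficients and positive leading coefficient, all of whose complex roots are either 0 or roots of unity, and suppose f(ζ) ≠ 0. Let arg(f(ζ)) denote the argument of the complex number f(ζ), taken in [0, 2π). Then π_{κ/d}(f) − arg(f(ζ))/π is an even integer. -/
open Polynomial

/-- `argCount t f` is the cardinality of the multiset `Arg_t(f)` of real numbers `λ` with
`0 < λ ≤ 2πt` such that `e^{iλ}` is a (complex) root of the real polynomial `f`, each such `λ`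
counted with the multiplicity of `e^{iλ}` as a root of `f`. -/
noncomputable def argCount (t : ℝ) (f : Polynomial ℝ) : ℕ :=
  ((f.map (algebraMap ℝ ℂ)).roots.map fun ξ =>
    Nat.card {l : ℝ // 0 < l ∧ l ≤ 2 * Real.pi * t ∧ Complex.exp ((l : ℂ) * Complex.I) = ξ}).sum

/-- `piFn κ d f` is the rational number
`π_{κ/d}(f) = (a(f) + A(f))·(κ/d) + |Arg_{κ/d}(f)| + (1/2)·(multiplicity of 1 as a root of f)`,
where `a(f)` is the multiplicity of `0` as a root of `f` and `A(f)` is the degree of `f`. -/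
noncomputable def piFn (κ d : ℕ) (f : Polynomial ℝ) : ℚ :=
  ((rootMultiplicity 0 f : ℚ) + (f.natDegree : ℚ)) * (κ : ℚ) / (d : ℚ)
    + (argCount ((κ : ℝ) / (d : ℝ)) f : ℚ) + (rootMultiplicity 1 f : ℚ) / 2

/-- All complex roots of `f` are either `0` or roots of unity. -/
def RootsZeroOrUnity (f : Polynomial ℝ) : Prop :=
  ∀ z ∈ (f.map (algebraMap ℝ ℂ)).roots, z = 0 ∨ ∃ n : ℕ, 0 < n ∧ z ^ n = 1

/-!
Over `ℂ`, `f(ζ) = c · ∏ (ζ - ξ)` with `c > 0`, the product running over the roots `ξ` of `f`,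
each `0` or on the unit circle. For `ζ = e^{iτ}` and `ξ = e^{iμ}` with `μ ∈ (0, 2π]`,
`ζ - ξ = 2 sin((τ - μ)/2) · e^{i((τ + μ)/2 + π/2)}`, so every factor is a positive multiple of
`e^{iβ}`, where `β` is `π` times the contribution of `ξ` to `π_{κ/d}(f)` plus `(μ - π)/2`
(plus nothing when `ξ ∈ {0, 1}`). These offsets are odd under complex conjugation, which permutes
the roots of the real polynomial `f`, so they sum to zero and `arg f(ζ) ≡ π · π_{κ/d}(f) (mod 2π)`.
-/

open Complex

/-- `Complex.arg` moved to `(0, 2π]`, the range of the angles `λ` counted by `argCount`. -/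
noncomputable def argIoc (ξ : ℂ) : ℝ := toIocMod Real.two_pi_pos 0 ξ.arg

lemma argIoc_mem_Ioc (ξ : ℂ) : argIoc ξ ∈ Set.Ioc 0 (2 * Real.pi) := by
  simpa [argIoc] using toIocMod_mem_Ioc Real.two_pi_pos 0 ξ.arg

lemma exp_toIocMod_mul_I (a x : ℝ) :
    exp (toIocMod Real.two_pi_pos a x * I) = exp (x * I) := by
  rw [toIocMod]
  push_cast
  exact exp_mul_I_periodic.sub_zsmul_eq _

lemma exp_argIoc_mul_I {ξ : ℂ} (hξ : ‖ξ‖ = 1) : exp (argIoc ξ * I) = ξ := by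
  simpa [argIoc, exp_toIocMod_mul_I, hξ] using norm_mul_exp_arg_mul_I ξ

lemma argIoc_exp_mul_I {l : ℝ} (hl : l ∈ Set.Ioc 0 (2 * Real.pi)) :
    argIoc (exp (l * I)) = l := by
  rw [argIoc, arg_exp_mul_I, toIocMod_toIocMod, toIocMod_eq_self]
  simpa using hl

lemma argIoc_one : argIoc 1 = 2 * Real.pi := by
  simpa using argIoc_exp_mul_I (l := 2 * Real.pi) ⟨Real.two_pi_pos, le_rfl⟩

lemma argIoc_conj {ξ : ℂ} (hξ : ‖ξ‖ = 1) (h1 : ξ ≠ 1) :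
    argIoc (starRingEnd ℂ ξ) = 2 * Real.pi - argIoc ξ := by
  obtain ⟨h0, h2⟩ := argIoc_mem_Ioc ξ
  have hlt : argIoc ξ < 2 * Real.pi := by
    refine h2.lt_of_ne fun h => h1 ?_
    rw [← exp_argIoc_mul_I hξ, h]
    simp
  have hconj : starRingEnd ℂ ξ = exp (↑(2 * Real.pi - argIoc ξ) * I) := by
    conv_lhs => rw [← exp_argIoc_mul_I hξ, ← exp_conj, map_mul, conj_ofReal, conj_I]
    convert (exp_mul_I_periodic (-(argIoc ξ : ℂ))).symm using 2 <;> push_cast <;> ring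
  rw [hconj, argIoc_exp_mul_I ⟨by linarith, by linarith⟩]

lemma natCard_exp_mul_I_eq_zero (τ : ℝ) :
    Nat.card {l : ℝ // 0 < l ∧ l ≤ τ ∧ exp (l * I) = 0} = 0 := by
  simp [exp_ne_zero]

lemma natCard_exp_mul_I_eq {τ : ℝ} (hτ : τ ≤ 2 * Real.pi) {ξ : ℂ} (hξ : ‖ξ‖ = 1) :
    Nat.card {l : ℝ // 0 < l ∧ l ≤ τ ∧ exp (l * I) = ξ} = if argIoc ξ ≤ τ then 1 else 0 := by
  have key : ∀ l : ℝ, (0 < l ∧ l ≤ τ ∧ exp (l * I) = ξ) ↔ (l = argIoc ξ ∧ argIoc ξ ≤ τ) := by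
    intro l
    constructor
    · rintro ⟨hl0, hlτ, rfl⟩
      rw [argIoc_exp_mul_I ⟨hl0, hlτ.trans hτ⟩]
      exact ⟨rfl, hlτ⟩
    · rintro ⟨rfl, hle⟩
      exact ⟨(argIoc_mem_Ioc ξ).1, hle, exp_argIoc_mul_I hξ⟩
  simp only [key]
  split_ifs with h <;> simp [h]

noncomputable def rootWeight (t : ℝ) (ξ : ℂ) : ℝ :=
  ((if ξ = 0 then 1 else 0) + 1) * t
    + Nat.card {l : ℝ // 0 < l ∧ l ≤ 2 * Real.pi * t ∧ exp (l * I) = ξ}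
    + (if ξ = 1 then 1 else 0) / 2

lemma rootMultiplicity_eq_sum_roots_map (f : ℝ[X]) (a : ℝ) :
    (rootMultiplicity a f : ℝ) =
      ((f.map (algebraMap ℝ ℂ)).roots.map fun ξ => if ξ = (a : ℂ) then (1 : ℝ) else 0).sum := by
  rw [Multiset.sum_map_eq_nsmul_single (a : ℂ) (fun ξ hξ _ => if_neg hξ), if_pos rfl, nsmul_one,
    count_roots]
  exact_mod_cast eq_rootMultiplicity_map (algebraMap ℝ ℂ).injective a

lemma piFn_eq_sum_rootWeight (κ d : ℕ) (f : ℝ[X]) :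
    (piFn κ d f : ℝ) = ((f.map (algebraMap ℝ ℂ)).roots.map (rootWeight (κ / d))).sum := by
  have hdeg : (f.natDegree : ℝ) = ((f.map (algebraMap ℝ ℂ)).roots.map fun _ => (1 : ℝ)).sum := by
    rw [Multiset.map_const', Multiset.sum_replicate, nsmul_one, ← natDegree_map (algebraMap ℝ ℂ),
      (IsAlgClosed.splits _).natDegree_eq_card_roots]
  have hmul0 := rootMultiplicity_eq_sum_roots_map f 0
  have hmul1 := rootMultiplicity_eq_sum_roots_map f 1
  push_cast at hmul0 hmul1
  unfold rootWeight
  simp only [piFn, argCount, Multiset.sum_map_add, Multiset.sum_map_mul_right,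
    Multiset.sum_map_div]
  push_cast
  simp only [Multiset.map_map, Function.comp_def, Rat.cast_natCast]
  rw [hmul0, hmul1, hdeg]
  ring

noncomputable def argOffset (ξ : ℂ) : ℝ :=
  if ξ = 0 ∨ ξ = 1 then 0 else (argIoc ξ - Real.pi) / 2

lemma argOffset_conj {ξ : ℂ} (hξ : ξ = 0 ∨ ‖ξ‖ = 1) :
    argOffset (starRingEnd ℂ ξ) = -argOffset ξ := by
  by_cases h : ξ = 0 ∨ ξ = 1
  · rcases h with rfl | rfl <;> simp [argOffset]
  · have hξ1 : ‖ξ‖ = 1 := hξ.resolve_left fun h0 => h (Or.inl h0)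
    have hc : ¬(starRingEnd ℂ ξ = 0 ∨ starRingEnd ℂ ξ = 1) := by
      simpa [map_eq_one_iff _ (RingHom.injective (starRingEnd ℂ))] using h
    rw [argOffset, argOffset, if_neg h, if_neg hc, argIoc_conj hξ1 fun h1 => h (Or.inr h1)]
    ring

lemma Multiset.sum_map_eq_zero_of_map_eq_self {α M : Type*} [AddCommGroup M]
    [IsAddTorsionFree M] {s : Multiset α} {σ : α → α} (hs : s.map σ = s) {g : α → M}
    (hg : ∀ a ∈ s, g (σ a) = -g a) : (s.map g).sum = 0 := by
  have h : (s.map g).sum = -(s.map g).sum := by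
    conv_lhs => rw [← hs, Multiset.map_map, Function.comp_def]
    rw [Multiset.map_congr rfl hg, Multiset.sum_map_neg]
  exact self_eq_neg.mp h

lemma roots_map_conj_eq (f : ℝ[X]) :
    (f.map (algebraMap ℝ ℂ)).roots.map (starRingEnd ℂ) = (f.map (algebraMap ℝ ℂ)).roots := by
  rw [← (IsAlgClosed.splits _).roots_map, Polynomial.map_map]
  congr 2
  ext x
  simp

lemma exp_mul_I_sub_exp_mul_I (a b : ℝ) :
    exp (a * I) - exp (b * I) =
      (2 * Real.sin ((a - b) / 2) : ℝ) * exp (((a + b) / 2 + Real.pi / 2 : ℝ) * I) := by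
  set m : ℂ := (((a + b) / 2 : ℝ) : ℂ)
  set h : ℂ := (((a - b) / 2 : ℝ) : ℂ)
  have hdiff : exp (h * I) - exp (-h * I) = 2 * sin h * I := by
    rw [exp_mul_I, exp_mul_I, cos_neg, sin_neg]; ring
  have hI : exp (((Real.pi / 2 : ℝ) : ℂ) * I) = I := by push_cast; exact exp_pi_div_two_mul_I
  calc exp (a * I) - exp (b * I) = exp (m * I) * (exp (h * I) - exp (-h * I)) := by
        rw [mul_sub, ← exp_add, ← exp_add]; congr 2 <;> simp only [m, h] <;> push_cast <;> ring
    _ = _ := by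
        rw [hdiff, ofReal_add, add_mul, exp_add, hI, ofReal_mul, ofReal_sin, ofReal_ofNat]
        ring

lemma exists_pos_mul_exp_eq_exp_sub_exp {τ μ : ℝ} (hτμ : |τ - μ| ≤ 2 * Real.pi)
    (hne : exp (τ * I) ≠ exp (μ * I)) :
    ∃ r : ℝ, 0 < r ∧ exp (τ * I) - exp (μ * I) =
      r * exp (((τ + μ) / 2 + if μ < τ then Real.pi / 2 else -(Real.pi / 2) : ℝ) * I) := by
  have hsin : Real.sin ((τ - μ) / 2) ≠ 0 := by
    intro h0
    apply hne
    rw [← sub_eq_zero, exp_mul_I_sub_exp_mul_I, h0]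
    simp
  obtain ⟨hlo, hhi⟩ := abs_le.mp hτμ
  rw [exp_mul_I_sub_exp_mul_I]
  split_ifs with h
  · refine ⟨2 * Real.sin ((τ - μ) / 2), ?_, rfl⟩
    have := Real.sin_nonneg_of_nonneg_of_le_pi (x := (τ - μ) / 2) (by linarith) (by linarith)
    positivity
  · -- a negative sine is absorbed into the phase via `e^{iπ} = -1`
    refine ⟨-(2 * Real.sin ((τ - μ) / 2)), ?_, ?_⟩
    · have hneg := (Real.sin_nonpos_of_nonpos_of_neg_pi_le (x := (τ - μ) / 2) (by linarith)
        (by linarith)).lt_of_ne hsin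
      linarith
    · have := exp_mul_I_antiperiodic (((τ + μ) / 2 + -(Real.pi / 2) : ℝ) : ℂ)
      push_cast at this ⊢
      rw [show ((τ:ℂ) + μ) / 2 + Real.pi / 2 = (τ + μ) / 2 + -(Real.pi / 2) + Real.pi by ring, this]
      ring

lemma pi_mul_rootWeight_add_argOffset {t : ℝ} (ht1 : t < 1) {ξ : ℂ} (hξ : ‖ξ‖ = 1)
    (hne : argIoc ξ ≠ 2 * Real.pi * t) :
    Real.pi * rootWeight t ξ + argOffset ξ = (2 * Real.pi * t + argIoc ξ) / 2
      + if argIoc ξ < 2 * Real.pi * t then Real.pi / 2 else -(Real.pi / 2) := by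
  have hπ := Real.pi_pos
  have hξ0 : ξ ≠ 0 := by rintro rfl; simp at hξ
  rw [rootWeight, argOffset, natCard_exp_mul_I_eq (by nlinarith) hξ, if_neg hξ0]
  rcases eq_or_ne ξ 1 with rfl | hξ1
  · have : ¬ 2 * Real.pi ≤ 2 * Real.pi * t := by nlinarith
    simp only [argIoc_one, if_neg this, if_neg (mt le_of_lt this), if_true, or_true]
    ring
  · simp only [hξ0, hξ1, or_self, if_false]
    rcases lt_or_gt_of_ne hne with h | h
    · rw [if_pos h.le, if_pos h]; ring
    · rw [if_neg (not_le.mpr h), if_neg (not_lt.mpr h.le)]; ring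

lemma exists_pos_mul_exp_eq_sub {t : ℝ} (ht0 : 0 ≤ t) (ht1 : t < 1) {ξ : ℂ}
    (hξ : ξ = 0 ∨ ‖ξ‖ = 1) (hne : ξ ≠ exp (↑(2 * Real.pi * t) * I)) :
    ∃ r : ℝ, 0 < r ∧ exp (↑(2 * Real.pi * t) * I) - ξ =
      r * exp (↑(Real.pi * rootWeight t ξ + argOffset ξ) * I) := by
  rcases hξ with rfl | hξ
  · refine ⟨1, one_pos, ?_⟩
    simp only [rootWeight, argOffset, natCard_exp_mul_I_eq_zero]
    norm_num
    ring_nf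
  · obtain ⟨hμ0, hμ2⟩ := argIoc_mem_Ioc ξ
    have hne' : exp (↑(2 * Real.pi * t) * I) ≠ exp (argIoc ξ * I) := by
      rw [exp_argIoc_mul_I hξ]; exact hne.symm
    have hτμ : |2 * Real.pi * t - argIoc ξ| ≤ 2 * Real.pi := by
      rw [abs_le]; constructor <;> nlinarith [Real.pi_pos]
    rw [pi_mul_rootWeight_add_argOffset ht1 hξ fun h => hne' (by rw [h])]
    simpa only [exp_argIoc_mul_I hξ] using exists_pos_mul_exp_eq_exp_sub_exp hτμ hne'

lemma exists_pos_mul_exp_prod_map {α : Type*} {s : Multiset α} {g : α → ℂ} {γ : α → ℝ}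
    (h : ∀ a ∈ s, ∃ r : ℝ, 0 < r ∧ g a = r * exp (γ a * I)) :
    ∃ r : ℝ, 0 < r ∧ (s.map g).prod = r * exp (↑(s.map γ).sum * I) := by
  induction s using Multiset.induction_on with
  | empty => exact ⟨1, one_pos, by simp⟩
  | cons a s ih =>
    obtain ⟨r, hr, hs⟩ := ih fun b hb => h b (Multiset.mem_cons_of_mem hb)
    obtain ⟨q, hq, ha⟩ := h a (Multiset.mem_cons_self a s)
    refine ⟨q * r, mul_pos hq hr, ?_⟩
    rw [Multiset.map_cons, Multiset.prod_cons, Multiset.map_cons, Multiset.sum_cons, hs, ha]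
    push_cast
    rw [add_mul, exp_add]
    ring

lemma exists_int_eq_add_of_pos_mul_exp {r φ θ : ℝ} (hr : 0 < r)
    (h : (r : ℂ) * exp (φ * I) = ‖(r : ℂ) * exp (φ * I)‖ * exp (θ * I)) :
    ∃ n : ℤ, φ = θ + n * (2 * Real.pi) := by
  rw [norm_mul, norm_exp_ofReal_mul_I, mul_one, norm_real, Real.norm_of_nonneg hr.le] at h
  obtain ⟨n, hn⟩ := exp_eq_exp_iff_exists_int.mp (mul_left_cancel₀ (ofReal_ne_zero.mpr hr.ne') h)
  exact ⟨n, by simpa using congrArg Complex.im hn⟩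

lemma RootsZeroOrUnity.eq_zero_or_norm_eq_one {f : ℝ[X]} (hf : RootsZeroOrUnity f) {ξ : ℂ}
    (hξ : ξ ∈ (f.map (algebraMap ℝ ℂ)).roots) : ξ = 0 ∨ ‖ξ‖ = 1 :=
  (hf ξ hξ).imp_right fun ⟨_, hn, hpow⟩ => norm_eq_one_of_pow_eq_one hpow hn.ne'

lemma exists_pos_aeval_eq_mul_exp_pi_mul_piFn {κ d : ℕ} (hκd : κ < d) {f : ℝ[X]}
    (hlead : 0 < f.leadingCoeff) (hroots : RootsZeroOrUnity f)
    (hfζ : aeval (exp (↑(2 * Real.pi * (κ / d : ℝ)) * I)) f ≠ 0) :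
    ∃ R : ℝ, 0 < R ∧
      aeval (exp (↑(2 * Real.pi * (κ / d : ℝ)) * I)) f = R * exp (↑(Real.pi * piFn κ d f) * I) := by
  set t : ℝ := κ / d
  have ht0 : 0 ≤ t := by positivity
  have ht1 : t < 1 := (div_lt_one (by exact_mod_cast (Nat.zero_le κ).trans_lt hκd)).mpr
    (by exact_mod_cast hκd)
  set ζ := exp (↑(2 * Real.pi * t) * I)
  set F := f.map (algebraMap ℝ ℂ)
  have hroot_ne : ∀ ξ ∈ F.roots, ξ ≠ ζ := fun ξ hξ h =>
    hfζ (by rw [← eval_map_algebraMap, ← h]; exact (mem_roots'.mp hξ).2)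
  obtain ⟨r, hr, hprod⟩ := exists_pos_mul_exp_prod_map fun ξ hξ =>
    exists_pos_mul_exp_eq_sub ht0 ht1 (hroots.eq_zero_or_norm_eq_one hξ) (hroot_ne ξ hξ)
  have hphase : (F.roots.map fun ξ => Real.pi * rootWeight t ξ + argOffset ξ).sum
      = Real.pi * piFn κ d f := by
    rw [Multiset.sum_map_add, Multiset.sum_map_mul_left, piFn_eq_sum_rootWeight,
      Multiset.sum_map_eq_zero_of_map_eq_self (roots_map_conj_eq f)
        fun ξ hξ => argOffset_conj (hroots.eq_zero_or_norm_eq_one hξ), add_zero]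
  refine ⟨f.leadingCoeff * r, mul_pos hlead hr, ?_⟩
  rw [← eval_map_algebraMap, (IsAlgClosed.splits F).eval_eq_prod_roots, leadingCoeff_map,
    hprod, hphase, coe_algebraMap]
  push_cast
  ring

theorem piFn_eq_arg_mod_two_general (κ d : ℕ) (hκd : κ < d)
    (f : Polynomial ℝ)
    (hlead : 0 < f.leadingCoeff) (hroots : RootsZeroOrUnity f)
    (ζ : ℂ) (hζ : ζ = Complex.exp (2 * (Real.pi : ℂ) * (κ : ℂ) / (d : ℂ) * Complex.I))
    (hfζ : Polynomial.aeval ζ f ≠ 0)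
    (θ : ℝ)
    (hθ : Polynomial.aeval ζ f =
      (‖Polynomial.aeval ζ f‖ : ℂ) * Complex.exp ((θ : ℂ) * Complex.I)) :
    ∃ m : ℤ, (piFn κ d f : ℝ) - θ / Real.pi = 2 * (m : ℝ) := by
  have hζ' : ζ = exp (↑(2 * Real.pi * (κ / d : ℝ)) * I) := by
    rw [hζ]
    push_cast
    ring_nf
  rw [hζ'] at hfζ hθ
  obtain ⟨R, hR, heval⟩ := exists_pos_aeval_eq_mul_exp_pi_mul_piFn hκd hlead hroots hfζ
  obtain ⟨n, hn⟩ := exists_int_eq_add_of_pos_mul_exp hR (heval ▸ hθ)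
  refine ⟨n, ?_⟩
  field_simp
  linarith

/-- For `f` with positive leading coefficient, roots among `0` and roots of unity, and
`f(ζ) ≠ 0` where `ζ = e^{2πiκ/d}`: the quantity `π_{κ/d}(f) − arg(f(ζ))/π` is an even integer,
where `arg(f(ζ))` is the argument of `f(ζ)` taken in `[0, 2π)` (characterized by
`0 ≤ θ < 2π` and `f(ζ) = |f(ζ)|·e^{iθ}`). -/
theorem piFn_eq_arg_mod_two (κ d : ℕ) (hd : 2 ≤ d) (hκ1 : 1 ≤ κ) (hκd : κ < d)
    (hcop : Nat.Coprime κ d) (f : Polynomial ℝ) (hf : f ≠ 0)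
    (hlead : 0 < f.leadingCoeff) (hroots : RootsZeroOrUnity f)
    (ζ : ℂ) (hζ : ζ = Complex.exp (2 * (Real.pi : ℂ) * (κ : ℂ) / (d : ℂ) * Complex.I))
    (hfζ : Polynomial.aeval ζ f ≠ 0)
    (θ : ℝ) (hθ0 : 0 ≤ θ) (hθ2 : θ < 2 * Real.pi)
    (hθ : Polynomial.aeval ζ f =
      (‖Polynomial.aeval ζ f‖ : ℂ) * Complex.exp ((θ : ℂ) * Complex.I)) :
    ∃ m : ℤ, (piFn κ d f : ℝ) - θ / Real.pi = 2 * (m : ℝ) :=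
  piFn_eq_arg_mod_two_general κ d hκd f hlead hroots ζ hζ hfζ θ hθ
end

section
/- Let κ and d be coprime positive integers and set ζ = e^{2πiκ/d}. Let f and g be nonzero polynomials in one variable q with real coefficients and positive leading coefficients, all of whose complex roots are either 0 or roots of unity, and suppose that f(ζ) ≠ 0, g(ζ) ≠ 0, and that the complex number f(ζ)/g(ζ) is real. Then π_{κ/d}(f) − π_{κ/d}(g) is an integer; it is even if f(ζ)/g(ζ) > 0 and odd if f(ζ)/g(ζ) < 0. -/
open Polynomial

/-!
Say that `w` has phase `q` if `w ∈ ℝ_{>0} · e^{iπq}`, so phases are measured in half-turns and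
add under multiplication. Put `t = κ/d` and `ζ = e^{2πit}`, and factor
`f(ζ) = lc(f) · ∏ (ζ - z)` over the complex roots `z` of `f`. A root `z = 0` contributes the
factor `ζ`, of phase `2t`. For `|z| = 1` write `-z = e^{iφ}` with `φ = arg(-z) ∈ (-π, π]`; then
`ζ - z = 2 cos(πt - φ/2) · e^{i(πt + φ/2)}`, and the sign of the cosine is `(-1)^n`, where `n` is
the number of `λ ∈ (0, 2πt]` with `e^{iλ} = z`. So `ζ - z` has phase `t + n + φ/(2π)`. As `f` is
real, its roots come in conjugate pairs, over which the terms `φ/(2π)` cancel except at `z = 1`,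
where `φ = π`. Summing up, `f(ζ)` is a positive multiple of `e^{iπ π_{κ/d}(f)}`; so if
`f(ζ)/g(ζ) = r` is real, `π_{κ/d}(f) - π_{κ/d}(g)` is an integer whose parity is the sign of `r`.
-/

open Complex
open scoped Real

def HasPhase (q : ℝ) (w : ℂ) : Prop :=
  ∃ ρ : ℝ, 0 < ρ ∧ w = ρ * exp (π * q * I)

namespace HasPhase

variable {q q' : ℝ} {w w' : ℂ}

lemma exp_mul_I (q : ℝ) : HasPhase q (exp (π * q * I)) := ⟨1, one_pos, by simp⟩

lemma ofReal_of_pos {ρ : ℝ} (hρ : 0 < ρ) : HasPhase 0 ρ := ⟨ρ, hρ, by simp⟩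

lemma congr (h : HasPhase q w) (hq : q = q') (hw : w = w') : HasPhase q' w' := hq ▸ hw ▸ h

lemma mul (h : HasPhase q w) (h' : HasPhase q' w') : HasPhase (q + q') (w * w') := by
  obtain ⟨ρ, hρ, rfl⟩ := h
  obtain ⟨ρ', hρ', rfl⟩ := h'
  refine ⟨ρ * ρ', mul_pos hρ hρ', ?_⟩
  push_cast
  rw [mul_add, add_mul, Complex.exp_add]
  ring

lemma div (h : HasPhase q w) (h' : HasPhase q' w') : HasPhase (q - q') (w / w') := by
  obtain ⟨ρ, hρ, rfl⟩ := h
  obtain ⟨ρ', hρ', rfl⟩ := h'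
  refine ⟨ρ / ρ', div_pos hρ hρ', ?_⟩
  push_cast
  rw [mul_sub, sub_mul, Complex.exp_sub]
  field_simp

lemma multiset_prod {ι : Type*} {s : Multiset ι} {q : ι → ℝ} {w : ι → ℂ}
    (h : ∀ i ∈ s, HasPhase (q i) (w i)) : HasPhase (s.map q).sum (s.map w).prod := by
  induction s using Multiset.induction_on with
  | empty => simpa using ofReal_of_pos one_pos
  | cons a s ih =>
    rw [Multiset.map_cons, Multiset.map_cons, Multiset.sum_cons, Multiset.prod_cons]
    exact (h a (Multiset.mem_cons_self a s)).mul
      (ih fun i hi => h i (Multiset.mem_cons_of_mem hi))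

lemma exists_int_of_ofReal {r : ℝ} (h : HasPhase q r) :
    ∃ m : ℤ, q = m ∧ (0 < r → Even m) ∧ (r < 0 → Odd m) := by
  obtain ⟨ρ, hρ, hr⟩ := h
  rw [← ofReal_mul] at hr
  have hre := congrArg re hr
  have him := congrArg im hr
  rw [ofReal_re, re_ofReal_mul, exp_ofReal_mul_I_re] at hre
  rw [ofReal_im, im_ofReal_mul, exp_ofReal_mul_I_im, zero_eq_mul] at him
  obtain ⟨m, hm⟩ := Real.sin_eq_zero_iff.mp (him.resolve_left hρ.ne')
  have hqm : q = m := mul_left_cancel₀ Real.pi_ne_zero (by linarith)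
  rw [← hm, mul_comm, Real.cos_int_mul_pi] at hre
  refine ⟨m, hqm, fun hr0 => ?_, fun hr0 => ?_⟩
  · by_contra hodd
    rw [Int.not_even_iff_odd.mp hodd |>.neg_one_zpow] at hre
    linarith
  · by_contra heven
    rw [Int.not_odd_iff_even.mp heven |>.neg_one_zpow] at hre
    linarith

end HasPhase

lemma exp_mul_I_add_exp_mul_I (x y : ℂ) :
    exp (x * I) + exp (y * I) = 2 * cos ((x - y) / 2) * exp ((x + y) / 2 * I) := by
  rw [two_cos, add_mul, ← Complex.exp_add, ← Complex.exp_add]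
  ring_nf

lemma hasPhase_cos_pi_mul (v : ℝ) (h : Real.cos (π * v) ≠ 0) :
    HasPhase ⌊v + 1 / 2⌋ (Real.cos (π * v)) := by
  set k := ⌊v + 1 / 2⌋
  have hcos : Real.cos (π * v) = Real.cos (π * (v - k)) * (-1) ^ k := by
    rw [mul_comm _ ((-1 : ℝ) ^ k), ← Real.cos_add_int_mul_pi]
    ring_nf
  have hk₁ := Int.floor_le (v + 1 / 2)
  have hk₂ := Int.lt_floor_add_one (v + 1 / 2)
  have hpos : 0 < Real.cos (π * (v - k)) := by
    refine lt_of_le_of_ne (Real.cos_nonneg_of_mem_Icc ⟨?_, ?_⟩) fun h0 => h ?_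
    · nlinarith [Real.pi_pos]
    · nlinarith [Real.pi_pos]
    · rw [hcos, ← h0, zero_mul]
  have hexp : exp (π * k * I) = (-1) ^ k := by
    rw [show (π : ℂ) * k * I = k * (π * I) by ring, exp_int_mul, exp_pi_mul_I]
  refine ⟨_, hpos, ?_⟩
  rw [hcos, ofReal_mul, ofReal_zpow, ofReal_neg, ofReal_one, ofReal_intCast, hexp]

lemma hasPhase_exp_add_exp (a b : ℝ) (h : exp (π * a * I) + exp (π * b * I) ≠ 0) :
    HasPhase ((a + b) / 2 + ⌊(a - b) / 2 + 1 / 2⌋) (exp (π * a * I) + exp (π * b * I)) := by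
  have hcos : cos ((π * a - π * b) / 2) = (Real.cos (π * ((a - b) / 2)) : ℂ) := by
    push_cast
    ring_nf
  rw [exp_mul_I_add_exp_mul_I, hcos] at h ⊢
  have hc : Real.cos (π * ((a - b) / 2)) ≠ 0 := fun h0 => h (by rw [h0]; simp)
  refine (((HasPhase.ofReal_of_pos two_pos).mul (hasPhase_cos_pi_mul _ hc)).mul
    (HasPhase.exp_mul_I ((a + b) / 2))).congr (by ring) ?_
  push_cast
  ring_nf

/-- `argCount t f` is the sum of `angleCount t` over the complex roots of `f`. -/
noncomputable def angleCount (t : ℝ) (ξ : ℂ) : ℕ :=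
  Nat.card {l : ℝ // 0 < l ∧ l ≤ 2 * π * t ∧ exp (l * I) = ξ}

lemma exp_mul_I_eq_exp_mul_I_iff {l θ : ℝ} :
    exp (l * I) = exp (θ * I) ↔ ∃ k : ℤ, θ + 2 * π * k = l := by
  rw [exp_eq_exp_iff_exists_int]
  refine exists_congr fun k => ⟨fun h => ?_, fun h => ?_⟩
  · have h' : ((θ + 2 * π * k : ℝ) : ℂ) * I = l * I := by
      rw [h]
      push_cast
      ring
    exact_mod_cast (mul_left_inj' I_ne_zero).mp h'
  · rw [← h]
    push_cast
    ring

lemma angleCount_exp_mul_I (t θ : ℝ) :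
    angleCount t (exp (θ * I)) = (⌊t - θ / (2 * π)⌋ - ⌊-θ / (2 * π)⌋).toNat := by
  have hπ : 0 < 2 * π := Real.two_pi_pos
  have hset : {l : ℝ | 0 < l ∧ l ≤ 2 * π * t ∧ exp (l * I) = exp (θ * I)} =
      (fun k : ℤ => θ + 2 * π * k) '' Set.Ioc ⌊-θ / (2 * π)⌋ ⌊t - θ / (2 * π)⌋ := by
    ext l
    simp only [Set.mem_ofPred_eq, Set.mem_image, Set.mem_Ioc, exp_mul_I_eq_exp_mul_I_iff]
    constructor
    · rintro ⟨hl₀, hlt, k, rfl⟩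
      refine ⟨k, ⟨?_, ?_⟩, rfl⟩
      · rw [Int.floor_lt, div_lt_iff₀ hπ]
        linarith
      · rw [Int.le_floor, le_sub_iff_add_le, ← le_sub_iff_add_le', div_le_iff₀ hπ]
        linarith
    · rintro ⟨k, ⟨hk₀, hkt⟩, rfl⟩
      rw [Int.floor_lt, div_lt_iff₀ hπ] at hk₀
      rw [Int.le_floor, le_sub_iff_add_le, ← le_sub_iff_add_le', div_le_iff₀ hπ] at hkt
      exact ⟨by linarith, by linarith, k, rfl⟩
  have hinj : Function.Injective fun k : ℤ => θ + 2 * π * k := fun k k' h => by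
    simpa [hπ.ne'] using h
  rw [angleCount, ← Set.coe_ofPred, Nat.card_coe_set_eq, hset, Set.ncard_image_of_injective _ hinj,
    ← Finset.coe_Ioc, Set.ncard_coe_finset, Int.card_Ioc]

lemma angleCount_zero (t : ℝ) : angleCount t 0 = 0 :=
  have : IsEmpty {l : ℝ // 0 < l ∧ l ≤ 2 * π * t ∧ exp (l * I) = 0} :=
    ⟨fun l => exp_ne_zero _ l.2.2.2⟩
  Nat.card_of_isEmpty

section Factors

variable {t : ℝ} {z : ℂ} {f : ℝ[X]}

lemma neg_eq_exp_arg_neg (hz : ‖z‖ = 1) : -z = exp (arg (-z) * I) := by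
  simpa [hz] using (norm_mul_exp_arg_mul_I (-z)).symm

lemma angleCount_of_norm_eq_one (ht : 0 ≤ t) (hz : ‖z‖ = 1) :
    (angleCount t z : ℤ) = ⌊t - arg (-z) / (2 * π) + 1 / 2⌋ := by
  have hπ : 0 < 2 * π := Real.two_pi_pos
  set x := arg (-z) / (2 * π)
  have hzx : z = exp ((2 * π * (x + 1 / 2) : ℝ) * I) := by
    rw [← neg_neg z, neg_eq_exp_arg_neg hz, mul_add, mul_div_cancel₀ _ hπ.ne']
    push_cast
    rw [add_mul, Complex.exp_add, show (2 * π * (1 / 2) : ℂ) = π by ring, exp_pi_mul_I]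
    ring
  have hx : -(1 / 2 : ℝ) < x ∧ x ≤ 1 / 2 := by
    rw [lt_div_iff₀ hπ, div_le_iff₀ hπ]
    constructor <;> linarith [neg_pi_lt_arg (-z), arg_le_pi (-z)]
  have hfloor₀ : ⌊-(2 * π * (x + 1 / 2)) / (2 * π)⌋ = -1 := by
    rw [neg_div, mul_div_cancel_left₀ _ hπ.ne', Int.floor_eq_iff]
    constructor <;> push_cast <;> linarith
  have hfloor : ⌊t - 2 * π * (x + 1 / 2) / (2 * π)⌋ = ⌊t - x + 1 / 2⌋ - 1 := by
    rw [mul_div_cancel_left₀ _ hπ.ne', ← Int.floor_sub_one]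
    ring_nf
  have hnonneg : 0 ≤ ⌊t - x + 1 / 2⌋ := Int.floor_nonneg.mpr (by linarith)
  rw [hzx, angleCount_exp_mul_I, hfloor₀, hfloor, sub_neg_eq_add, sub_add_cancel,
    Int.toNat_of_nonneg hnonneg]

lemma hasPhase_sub_of_norm_eq_one (ht : 0 ≤ t) (hz : ‖z‖ = 1)
    (hζz : exp (2 * π * t * I) - z ≠ 0) :
    HasPhase (t + angleCount t z + arg (-z) / (2 * π)) (exp (2 * π * t * I) - z) := by
  have hz' := neg_eq_exp_arg_neg hz
  rw [← Int.cast_natCast, angleCount_of_norm_eq_one ht hz]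
  set φ := arg (-z)
  have hsum : exp (2 * π * t * I) - z =
      exp (π * (2 * t : ℝ) * I) + exp (π * (φ / π : ℝ) * I) := by
    rw [sub_eq_add_neg, hz']
    push_cast
    congr 2 <;> field_simp
  rw [hsum] at hζz ⊢
  refine (hasPhase_exp_add_exp _ _ hζz).congr ?_ rfl
  rw [show (2 * t - φ / π) / 2 + 1 / 2 = t - φ / (2 * π) + 1 / 2 by field_simp]
  field_simp
  ring

noncomputable def rootPhase (t : ℝ) (z : ℂ) : ℝ :=
  t + (if z = 0 then t else 0) + angleCount t z + arg (-z) / (2 * π)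

lemma hasPhase_rootPhase (ht : 0 ≤ t) (hz : z = 0 ∨ ‖z‖ = 1)
    (hζz : exp (2 * π * t * I) - z ≠ 0) :
    HasPhase (rootPhase t z) (exp (2 * π * t * I) - z) := by
  rcases hz with rfl | hz
  · refine (HasPhase.exp_mul_I (2 * t)).congr ?_ ?_
    · simp [rootPhase, angleCount_zero]
      ring
    · push_cast
      ring_nf
  · have hz₀ : z ≠ 0 := by
      rintro rfl
      simp at hz
    simpa [rootPhase, hz₀] using hasPhase_sub_of_norm_eq_one ht hz hζz

lemma sum_map_arg_neg {S : Multiset ℂ} (hS : S.map (starRingEnd ℂ) = S)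
    (h₁ : ∀ z ∈ S, arg (-z) = π → z = 1) :
    (S.map fun z => arg (-z)).sum = π * S.count 1 := by
  have hpair : ∀ z ∈ S, arg (-z) + arg (-(starRingEnd ℂ) z) = if z = 1 then 2 * π else 0 := by
    intro z hz
    rw [← map_neg, arg_conj]
    split_ifs with hπ hz₁ hz₁
    · linarith
    · exact absurd (h₁ z hz hπ) hz₁
    · simp [hz₁] at hπ
    · ring
  have hconj :
      (S.map fun z => arg (-(starRingEnd ℂ) z)).sum = (S.map fun z => arg (-z)).sum := by
    conv_rhs => rw [← hS, Multiset.map_map]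
    rfl
  have hsum : (S.map fun z => arg (-z)).sum + (S.map fun z => arg (-(starRingEnd ℂ) z)).sum =
      S.count 1 • (2 * π) := by
    rw [← Multiset.sum_map_add, Multiset.map_congr rfl hpair,
      Multiset.sum_map_eq_nsmul_single 1 (fun z hz _ => if_neg hz), if_pos rfl]
  rw [hconj, nsmul_eq_mul] at hsum
  linarith

lemma sum_map_rootPhase {S : Multiset ℂ} (hS : S.map (starRingEnd ℂ) = S)
    (hS' : ∀ z ∈ S, z = 0 ∨ ‖z‖ = 1) :
    (S.map (rootPhase t)).sum =
      t * (S.count 0 + Multiset.card S) + (S.map (angleCount t)).sum + S.count 1 / 2 := by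
  have h₁ : ∀ z ∈ S, arg (-z) = π → z = 1 := by
    intro z hz hπ
    rcases hS' z hz with rfl | hz'
    · simp [Real.pi_ne_zero.symm] at hπ
    · simpa [hπ, exp_pi_mul_I] using neg_eq_exp_arg_neg hz'
  unfold rootPhase
  simp only [Multiset.sum_map_add]
  rw [Multiset.map_const', Multiset.sum_replicate, nsmul_eq_mul,
    Multiset.sum_map_eq_nsmul_single 0 (fun z hz _ => if_neg hz), if_pos rfl, nsmul_eq_mul,
    Multiset.sum_map_div, sum_map_arg_neg hS h₁, Nat.cast_multiset_sum, Multiset.map_map,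
    Function.comp_def]
  field_simp
  ring

lemma count_aroots_algebraMap (a : ℝ) :
    (f.aroots ℂ).count (algebraMap ℝ ℂ a) = rootMultiplicity a f := by
  rw [aroots_def, count_roots, ← eq_rootMultiplicity_map (algebraMap ℝ ℂ).injective]

lemma map_conj_aroots : (f.aroots ℂ).map (starRingEnd ℂ) = f.aroots ℂ := by
  have hconj : (f.map (algebraMap ℝ ℂ)).map (starRingEnd ℂ) = f.map (algebraMap ℝ ℂ) := by
    rw [Polynomial.map_map]
    congr 1
    ext x
    simp
  rw [aroots_def, ← (IsAlgClosed.splits _).roots_map, hconj]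

lemma hasPhase_aeval (ht : 0 ≤ t) (hfl : 0 < f.leadingCoeff) (hfr : RootsZeroOrUnity f)
    (hfζ : aeval (exp (2 * π * t * I)) f ≠ 0) :
    HasPhase (t * (rootMultiplicity 0 f + f.natDegree) + argCount t f + rootMultiplicity 1 f / 2)
      (aeval (exp (2 * π * t * I)) f) := by
  have hunit : ∀ z ∈ f.aroots ℂ, z = 0 ∨ ‖z‖ = 1 := fun z hz =>
    (hfr z hz).imp_right fun ⟨n, hn, hzn⟩ => norm_eq_one_of_pow_eq_one hzn hn.ne'
  have hfactor : ∀ z ∈ f.aroots ℂ, exp (2 * π * t * I) - z ≠ 0 := by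
    intro z hz hζz
    rw [sub_eq_zero.mp hζz] at hfζ
    exact hfζ (mem_aroots'.mp hz).2
  rw [(IsAlgClosed.splits _).aeval_eq_prod_aroots]
  refine ((HasPhase.ofReal_of_pos hfl).mul
    (HasPhase.multiset_prod fun z hz => hasPhase_rootPhase ht (hunit z hz) (hfactor z hz))).congr
    ?_ rfl
  rw [zero_add, sum_map_rootPhase map_conj_aroots hunit, IsAlgClosed.card_aroots_eq_natDegree,
    ← map_zero (algebraMap ℝ ℂ), ← map_one (algebraMap ℝ ℂ), count_aroots_algebraMap,
    count_aroots_algebraMap]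
  rfl

end Factors

lemma hasPhase_piFn (κ d : ℕ) {f : ℝ[X]} (hfl : 0 < f.leadingCoeff) (hfr : RootsZeroOrUnity f)
    (hfζ : aeval (exp (2 * π * κ / d * I)) f ≠ 0) :
    HasPhase (piFn κ d f) (aeval (exp (2 * π * κ / d * I)) f) := by
  have hζ : exp (2 * π * κ / d * I) = exp (2 * π * ((κ / d : ℝ) : ℂ) * I) := by
    push_cast
    ring_nf
  rw [hζ] at hfζ ⊢
  refine (hasPhase_aeval (by positivity) hfl hfr hfζ).congr ?_ rfl
  push_cast [piFn]
  ring

theorem piFn_sub_int_parity_general (κ d : ℕ)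
    (f g : Polynomial ℝ)
    (hfl : 0 < f.leadingCoeff) (hgl : 0 < g.leadingCoeff)
    (hfr : RootsZeroOrUnity f) (hgr : RootsZeroOrUnity g)
    (ζ : ℂ) (hζ : ζ = Complex.exp (2 * (Real.pi : ℂ) * (κ : ℂ) / (d : ℂ) * Complex.I))
    (hfζ : Polynomial.aeval ζ f ≠ 0) (hgζ : Polynomial.aeval ζ g ≠ 0)
    (r : ℝ) (hr : Polynomial.aeval ζ f / Polynomial.aeval ζ g = (r : ℂ)) :
    ∃ m : ℤ, piFn κ d f - piFn κ d g = (m : ℚ) ∧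
      (0 < r → Even m) ∧ (r < 0 → Odd m) := by
  subst hζ
  have hratio := ((hasPhase_piFn κ d hfl hfr hfζ).div (hasPhase_piFn κ d hgl hgr hgζ)).congr rfl hr
  obtain ⟨m, hm, hparity⟩ := hratio.exists_int_of_ofReal
  exact ⟨m, by exact_mod_cast hm, hparity⟩

/-- Theorems 1.4/1.5 (polynomial content): if `f(ζ)/g(ζ)` is a real number `r`, then
`π_{κ/d}(f) − π_{κ/d}(g)` is an integer, even if `r > 0` and odd if `r < 0`. -/
theorem piFn_sub_int_parity (κ d : ℕ) (hκ : 0 < κ) (hd : 0 < d) (hcop : Nat.Coprime κ d)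
    (f g : Polynomial ℝ) (hf : f ≠ 0) (hg : g ≠ 0)
    (hfl : 0 < f.leadingCoeff) (hgl : 0 < g.leadingCoeff)
    (hfr : RootsZeroOrUnity f) (hgr : RootsZeroOrUnity g)
    (ζ : ℂ) (hζ : ζ = Complex.exp (2 * (Real.pi : ℂ) * (κ : ℂ) / (d : ℂ) * Complex.I))
    (hfζ : Polynomial.aeval ζ f ≠ 0) (hgζ : Polynomial.aeval ζ g ≠ 0)
    (r : ℝ) (hr : Polynomial.aeval ζ f / Polynomial.aeval ζ g = (r : ℂ)) :
    ∃ m : ℤ, piFn κ d f - piFn κ d g = (m : ℚ) ∧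
      (0 < r → Even m) ∧ (r < 0 → Odd m) :=
  piFn_sub_int_parity_general κ d f g hfl hgl hfr hgr ζ hζ hfζ hgζ r hr
end

section
/- Let d ≥ 2 and κ ≥ 1 be coprime integers, let i, j ≥ 0 be integers, and write κ(j−i) = ad + b with a an integer and 0 ≤ b < d. Then: if i − j > 0, then π_{κ/d}(q^{i+d} − q^j) − π_{κ/d}(q^i − q^j) = 2κ; if −d < i − j < 0, then this difference equals 2(κ − a) − 1; and if i − j < −d, then this difference equals 0. -/
open Polynomial

/-!
For `0 < N`, `q^(n+N) - q^n = q^n (q^N - 1)` has `a = n`, `A = n + N`, a simple root at `1`, and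
its roots on the unit circle are the `N`-th roots of unity, each simple. Summing over these roots,
`Arg_t` is in bijection with the angles `2πp/N`, `1 ≤ p ≤ ⌊N t⌋`. Hence, for `m ≠ n`,
`π_{κ/d}(q^m - q^n) = (m + n) κ/d + ⌊|m - n| κ/d⌋ + 1/2`, and the three cases compare
`⌊|i + d - j| κ/d⌋` with `⌊|i - j| κ/d⌋`. In the middle case `|i + d - j| = d - (j - i)`, and
`⌊(d - (j - i)) κ/d⌋ = κ - a - 1` because coprimality rules out `b = 0`.
-/

theorem Finset.sum_natCard_fiber_eq {α β : Type*} [DecidableEq β] (S : Finset β) (e : α → β)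
    (P : α → Prop) (hfin : {a | P a ∧ e a ∈ S}.Finite) :
    ∑ ξ ∈ S, Nat.card {a // P a ∧ e a = ξ} = Nat.card {a // P a ∧ e a ∈ S} := by
  set F := hfin.toFinset
  have hmaps : Set.MapsTo e F S := fun a ha => ((Set.Finite.mem_toFinset hfin).mp ha).2
  rw [show Nat.card {a // P a ∧ e a ∈ S} = F.card from Nat.card_eq_card_finite_toFinset hfin,
    Finset.card_eq_sum_card_fiberwise hmaps]
  refine Finset.sum_congr rfl fun ξ hξ => ?_
  rw [← Nat.card_eq_finsetCard]
  refine Nat.card_congr (Equiv.subtypeEquivRight fun a => ?_)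
  simp only [F, Finset.mem_filter, Set.Finite.mem_toFinset, Set.mem_ofPred_eq]
  constructor
  · rintro ⟨hP, rfl⟩; exact ⟨⟨hP, hξ⟩, rfl⟩
  · rintro ⟨⟨hP, -⟩, rfl⟩; exact ⟨hP, rfl⟩

open Complex in
theorem Complex.exp_mul_I_pow_eq_one_iff {N : ℕ} (hN : N ≠ 0) (l : ℝ) :
    exp (l * I) ^ N = 1 ↔ ∃ n : ℤ, l = 2 * Real.pi * n / N := by
  have hNR : (N : ℝ) ≠ 0 := by exact_mod_cast hN
  rw [← exp_nat_mul, exp_eq_one_iff]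
  refine exists_congr fun n => ?_
  rw [show (N : ℂ) * (l * I) = ((N * l : ℝ) : ℂ) * I by push_cast; ring,
    show (n : ℂ) * (2 * Real.pi * I) = ((2 * Real.pi * n : ℝ) : ℂ) * I by push_cast; ring,
    mul_left_inj' I_ne_zero, ofReal_inj, eq_div_iff hNR, mul_comm]

open Complex in
theorem Complex.setOf_angle_pow_eq_one {N : ℕ} (hN : N ≠ 0) (T : ℝ) :
    {l : ℝ | (0 < l ∧ l ≤ T) ∧ exp (l * I) ^ N = 1}
      = (fun p : ℕ => 2 * Real.pi * p / N) '' Set.Icc 1 ⌊N * T / (2 * Real.pi)⌋₊ := by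
  have hπ := Real.pi_pos
  have hNR : (0 : ℝ) < N := by positivity
  have hle (p : ℝ) : 2 * Real.pi * p / N ≤ T ↔ p ≤ N * T / (2 * Real.pi) := by
    rw [div_le_iff₀ hNR, le_div_iff₀ (by positivity)]; constructor <;> intro h <;> linarith
  ext l
  simp only [Set.mem_ofPred_eq, exp_mul_I_pow_eq_one_iff hN, Set.mem_image, Set.mem_Icc]
  constructor
  · rintro ⟨⟨hl0, hlT⟩, n, rfl⟩
    have hn : 0 < n := by
      have : (0 : ℝ) < n :=
        (mul_pos_iff_of_pos_left (by positivity)).mp ((div_pos_iff_of_pos_right hNR).mp hl0)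
      exact_mod_cast this
    lift n to ℕ using hn.le
    exact ⟨n, ⟨by exact_mod_cast hn, Nat.le_floor ((hle _).mp (by exact_mod_cast hlT))⟩, by simp⟩
  · rintro ⟨p, ⟨hp1, hpM⟩, rfl⟩
    exact ⟨⟨by positivity, (hle _).mpr ((Nat.le_floor_iff' (by omega)).mp hpM)⟩, p, by simp⟩

open Complex in
theorem Complex.natCard_angle_pow_eq_one {N : ℕ} (hN : N ≠ 0) (T : ℝ) :
    Nat.card {l : ℝ // (0 < l ∧ l ≤ T) ∧ exp (l * I) ^ N = 1} = ⌊N * T / (2 * Real.pi)⌋₊ := by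
  have hinj : Function.Injective fun p : ℕ => 2 * Real.pi * p / N := by
    intro p q h
    simpa [Real.pi_ne_zero, hN] using h
  rw [← Set.coe_ofPred, setOf_angle_pow_eq_one hN, Nat.card_image_of_injective hinj,
    Nat.card_coe_set_eq, ← Finset.coe_Icc, Set.ncard_coe_finset, Nat.card_Icc,
    Nat.add_sub_cancel]

section XPowSub

variable {K : Type*} [Field K] (n : ℕ) {N : ℕ}

theorem X_pow_add_sub_X_pow_eq_mul : (X ^ (n + N) - X ^ n : K[X]) = X ^ n * (X ^ N - 1) := by
  ring

theorem X_pow_add_sub_X_pow_ne_zero (hN : 0 < N) : (X ^ (n + N) - X ^ n : K[X]) ≠ 0 := by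
  rw [X_pow_add_sub_X_pow_eq_mul]
  exact mul_ne_zero (pow_ne_zero _ X_ne_zero) (X_pow_sub_C_ne_zero hN 1)

theorem roots_X_pow_add_sub_X_pow (hN : 0 < N) :
    (X ^ (n + N) - X ^ n : K[X]).roots = n • {0} + nthRoots N 1 := by
  have h := X_pow_add_sub_X_pow_ne_zero (K := K) n hN
  rw [X_pow_add_sub_X_pow_eq_mul] at h ⊢
  rw [roots_mul h, roots_X_pow, nthRoots, C_1]

theorem natDegree_X_pow_add_sub_X_pow (hN : 0 < N) :
    (X ^ (n + N) - X ^ n : K[X]).natDegree = n + N := by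
  rw [natDegree_sub_eq_left_of_natDegree_lt (by simp only [natDegree_X_pow]; omega),
    natDegree_X_pow]

theorem rootMultiplicity_zero_X_pow_add_sub_X_pow (hN : 0 < N) :
    rootMultiplicity 0 (X ^ (n + N) - X ^ n : K[X]) = n := by
  classical
  rw [← count_roots, roots_X_pow_add_sub_X_pow n hN, Multiset.count_add, Multiset.count_nsmul,
    Multiset.count_singleton_self, mul_one, add_eq_left, Multiset.count_eq_zero]
  simp [mem_nthRoots hN, zero_pow hN.ne']

theorem nodup_nthRoots_one [CharZero K] (hN : 0 < N) : (nthRoots N (1 : K)).Nodup :=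
  nodup_roots (separable_X_pow_sub_C 1 (by exact_mod_cast hN.ne') one_ne_zero)

theorem rootMultiplicity_one_X_pow_add_sub_X_pow [CharZero K] (hN : 0 < N) :
    rootMultiplicity 1 (X ^ (n + N) - X ^ n : K[X]) = 1 := by
  classical
  rw [← count_roots, roots_X_pow_add_sub_X_pow n hN, Multiset.count_add, Multiset.count_nsmul,
    Multiset.count_singleton, if_neg one_ne_zero, mul_zero, zero_add]
  exact Multiset.count_eq_one_of_mem (nodup_nthRoots_one hN) (by simp [mem_nthRoots hN])

end XPowSub

open Complex in
theorem argCount_X_pow_add_sub_X_pow (t : ℝ) (n : ℕ) {N : ℕ} (hN : 0 < N) :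
    argCount t (X ^ (n + N) - X ^ n) = ⌊N * t⌋₊ := by
  set g : ℂ → ℕ := fun ξ =>
    Nat.card {l : ℝ // 0 < l ∧ l ≤ 2 * Real.pi * t ∧ exp (l * I) = ξ}
  have hg0 : g 0 = 0 := @Nat.card_of_isEmpty _ ⟨fun l => exp_ne_zero _ l.2.2.2⟩
  have hroots : ((X ^ (n + N) - X ^ n : ℝ[X]).map (algebraMap ℝ ℂ)).roots
      = n • {0} + (nthRootsFinset N (1 : ℂ)).val := by
    simp only [Polynomial.map_sub, Polynomial.map_pow, map_X]
    rw [roots_X_pow_add_sub_X_pow n hN,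
      nthRootsFinset_def, Multiset.toFinset_val, (nodup_nthRoots_one hN).dedup]
  have hfib : ∑ ξ ∈ nthRootsFinset N (1 : ℂ), g ξ
      = Nat.card {l : ℝ // (0 < l ∧ l ≤ 2 * Real.pi * t) ∧ exp (l * I) ^ N = 1} := by
    have hfin : {l : ℝ | (0 < l ∧ l ≤ 2 * Real.pi * t) ∧
        exp (l * I) ∈ nthRootsFinset N (1 : ℂ)}.Finite := by
      simp only [mem_nthRootsFinset hN]
      rw [setOf_angle_pow_eq_one hN.ne']
      exact (Set.finite_Icc _ _).image _
    simp only [g, ← and_assoc]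
    rw [Finset.sum_natCard_fiber_eq _ _ _ hfin]
    simp only [mem_nthRootsFinset hN]
  show (((X ^ (n + N) - X ^ n : ℝ[X]).map (algebraMap ℝ ℂ)).roots.map g).sum = _
  rw [hroots, Multiset.map_add, Multiset.sum_add, Multiset.map_nsmul, Multiset.map_singleton,
    hg0, Multiset.sum_nsmul, Multiset.sum_singleton, smul_zero, zero_add, ← Finset.sum.eq_def, hfib, natCard_angle_pow_eq_one hN.ne']
  congr 1
  field_simp

theorem piFn_neg (κ d : ℕ) (f : ℝ[X]) : piFn κ d (-f) = piFn κ d f := by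
  have hrm (x : ℝ) : rootMultiplicity x (-f) = rootMultiplicity x f := by
    rw [← count_roots, ← count_roots, roots_neg]
  have harg (t : ℝ) : argCount t (-f) = argCount t f := by
    rw [argCount, argCount, Polynomial.map_neg, roots_neg]
  simp only [piFn, hrm, harg, natDegree_neg]

theorem piFn_X_pow_add_sub_X_pow (κ d n : ℕ) {N : ℕ} (hN : 0 < N) :
    piFn κ d (X ^ (n + N) - X ^ n) = (2 * n + N) * κ / d + ((N * κ / d : ℕ) : ℚ) + 1 / 2 := by
  rw [piFn, rootMultiplicity_zero_X_pow_add_sub_X_pow n hN, natDegree_X_pow_add_sub_X_pow n hN,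
    argCount_X_pow_add_sub_X_pow _ n hN, rootMultiplicity_one_X_pow_add_sub_X_pow n hN,
    ← mul_div_assoc, ← Nat.cast_mul, Nat.floor_div_eq_div]
  push_cast
  ring

theorem piFn_X_pow_sub_X_pow (κ d : ℕ) {m n : ℕ} (hmn : m ≠ n) :
    piFn κ d (X ^ m - X ^ n)
      = (m + n) * κ / d + ((|(m : ℤ) - n| * κ / d : ℤ) : ℚ) + 1 / 2 := by
  wlog h : n < m generalizing m n
  · rw [← neg_sub, piFn_neg, this hmn.symm (by omega), abs_sub_comm, add_comm (m : ℚ)]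
  obtain ⟨N, hN, rfl⟩ : ∃ N, 0 < N ∧ m = n + N := ⟨m - n, by omega, by omega⟩
  rw [piFn_X_pow_add_sub_X_pow κ d n hN]
  have habs : |((n + N : ℕ) : ℤ) - n| = N := by push_cast; simp
  rw [habs, show (N : ℤ) * κ / d = ((N * κ / d : ℕ) : ℤ) by norm_cast, Int.cast_natCast]
  push_cast
  ring

theorem Int.not_dvd_mul_of_coprime {κ d : ℕ} (hcop : Nat.Coprime κ d) {x : ℤ} (hx0 : 0 < x)
    (hxd : x < d) : ¬ (d : ℤ) ∣ κ * x := fun h =>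
  have := Int.le_of_dvd hx0 ((Nat.Coprime.isCoprime hcop.symm).dvd_of_dvd_mul_left h)
  absurd hxd (not_lt.mpr this)

theorem piFn_shift_sub_general (κ d : ℕ) (hd : 2 ≤ d) (hcop : Nat.Coprime κ d)
    (i j : ℕ) (a b : ℤ) (hab : (κ : ℤ) * ((j : ℤ) - (i : ℤ)) = a * (d : ℤ) + b)
    (hb0 : 0 ≤ b) (hbd : b < (d : ℤ)) :
    (0 < (i : ℤ) - (j : ℤ) →
      piFn κ d (X ^ (i + d) - X ^ j) - piFn κ d (X ^ i - X ^ j) = 2 * (κ : ℚ)) ∧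
    (-(d : ℤ) < (i : ℤ) - (j : ℤ) → (i : ℤ) - (j : ℤ) < 0 →
      piFn κ d (X ^ (i + d) - X ^ j) - piFn κ d (X ^ i - X ^ j)
        = 2 * ((κ : ℚ) - (a : ℚ)) - 1) ∧
    ((i : ℤ) - (j : ℤ) < -(d : ℤ) →
      piFn κ d (X ^ (i + d) - X ^ j) - piFn κ d (X ^ i - X ^ j) = 0) := by
  have hd0 : (0 : ℤ) < d := by omega
  have hdiff (h₁ : i + d ≠ j) (h₂ : i ≠ j) :
      piFn κ d (X ^ (i + d) - X ^ j) - piFn κ d (X ^ i - X ^ j)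
        = κ + ((|((i + d : ℕ) : ℤ) - j| * κ / d - |(i : ℤ) - j| * κ / d : ℤ) : ℚ) := by
    rw [piFn_X_pow_sub_X_pow κ d h₁, piFn_X_pow_sub_X_pow κ d h₂]
    push_cast
    field_simp
    ring
  refine ⟨fun h => ?_, fun h₁ h₂ => ?_, fun h => ?_⟩
  · rw [hdiff (by omega) (by omega), abs_of_pos (by push_cast; omega), abs_of_pos h,
      show (((i + d : ℕ) : ℤ) - j) * κ = (i - j) * κ + κ * d by push_cast; ring,
      Int.add_mul_ediv_right _ _ hd0.ne']
    push_cast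
    ring
  · have hb : b ≠ 0 := by
      rintro rfl
      exact Int.not_dvd_mul_of_coprime hcop (x := j - i) (by omega) (by omega) ⟨a, by linarith⟩
    have hq₁ : (j - i : ℤ) * κ / d = a :=
      ((Int.ediv_emod_unique (r := b) hd0).mpr ⟨by linarith, hb0, hbd⟩).1
    have hq₂ : (d - (j - i) : ℤ) * κ / d = κ - a - 1 :=
      ((Int.ediv_emod_unique (r := d - b) hd0).mpr ⟨by linarith, by omega, by omega⟩).1
    rw [hdiff (by omega) (by omega), abs_of_pos (by push_cast; omega), abs_of_neg h₂,
      show ((i + d : ℕ) : ℤ) - j = d - (j - i) by push_cast; ring, neg_sub, hq₁, hq₂]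
    push_cast
    ring
  · rw [hdiff (by omega) (by omega), abs_of_neg (by push_cast; omega), abs_of_neg (by omega),
      show -((i : ℤ) - j) * κ = -(((i + d : ℕ) : ℤ) - j) * κ + κ * d by push_cast; ring,
      Int.add_mul_ediv_right _ _ hd0.ne']
    push_cast
    ring

/-- Proposition 8.2, first equation: writing `κ(j−i) = ad + b` with `0 ≤ b < d`,
the difference `π_{κ/d}(q^{i+d} − q^j) − π_{κ/d}(q^i − q^j)` equals `2κ` if `i − j > 0`,
equals `2(κ − a) − 1` if `−d < i − j < 0`, and equals `0` if `i − j < −d`. -/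
theorem piFn_shift_sub (κ d : ℕ) (hd : 2 ≤ d) (hκ : 1 ≤ κ) (hcop : Nat.Coprime κ d)
    (i j : ℕ) (a b : ℤ) (hab : (κ : ℤ) * ((j : ℤ) - (i : ℤ)) = a * (d : ℤ) + b)
    (hb0 : 0 ≤ b) (hbd : b < (d : ℤ)) :
    (0 < (i : ℤ) - (j : ℤ) →
      piFn κ d (X ^ (i + d) - X ^ j) - piFn κ d (X ^ i - X ^ j) = 2 * (κ : ℚ)) ∧
    (-(d : ℤ) < (i : ℤ) - (j : ℤ) → (i : ℤ) - (j : ℤ) < 0 →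
      piFn κ d (X ^ (i + d) - X ^ j) - piFn κ d (X ^ i - X ^ j)
        = 2 * ((κ : ℚ) - (a : ℚ)) - 1) ∧
    ((i : ℤ) - (j : ℤ) < -(d : ℤ) →
      piFn κ d (X ^ (i + d) - X ^ j) - piFn κ d (X ^ i - X ^ j) = 0) :=
  piFn_shift_sub_general κ d hd hcop i j a b hab hb0 hbd
end

section
/- Let d ≥ 2 and κ ≥ 1 be coprime integers, let i, j ≥ 0 be integers, and write κ(j−i) = ad + b − d/2, where a is an integer and b is a half-integer with 0 ≤ b < d (b is an integer when d is even). Then: if 2κ(i−j) > −d, then π_{κ/d}(q^{i+d} + q^j) − π_{κ/d}(q^i + q^j) = 2κ; if d − 2κd ≤ 2κ(i−j) ≤ −d, then this difference equals 2(κ − a) + 1 when b = 0 and 2(κ − a) when b ≠ 0; and if 2κ(i−j) < d − 2κd, then this difference equals 0. -/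
open Polynomial

/-! For `n ≤ m` we have `X ^ m + X ^ n = X ^ n * (X ^ (m - n) + 1)`. The roots of `X ^ k + 1` are
simple and equal to `exp (i π (2q + 1) / k)`, so the arguments counted by `Arg_t` are the numbers
`π (2q + 1) / k ≤ 2πt`, and there are `⌊k t + 1/2⌋₊` of them. Hence
`π_{κ/d}(X ^ m + X ^ n) = (m + n) κ / d + round |κ (m - n) / d|`, and with `x = κ (j - i) / d` the
difference in question is `κ + round |κ - x| - round |x|`. The three cases are `x < 1/2`,
`1/2 ≤ x ≤ κ - 1/2` (where `x = a + b/d - 1/2` pins down both roundings) and `x > κ - 1/2`, which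
reduces to the first one under `x ↦ κ - x`. -/

open Complex Real

open Finset in
theorem sum_map_natCard_fiber {α β : Type*} {s : Multiset β} (hs : s.Nodup) {S : Set α}
    {f : α → β} (hfin : {a | a ∈ S ∧ f a ∈ s}.Finite) :
    (s.map fun b => Nat.card {a // a ∈ S ∧ f a = b}).sum = Nat.card {a // a ∈ S ∧ f a ∈ s} := by
  classical
  set F := hfin.toFinset
  have hfiber (b : β) (hb : b ∈ s) : Nat.card {a // a ∈ S ∧ f a = b} = #{a ∈ F | f a = b} := by
    have hset : {a | a ∈ S ∧ f a = b} = ↑{a ∈ F | f a = b} := by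
      ext a
      simp only [Set.mem_ofPred_eq, coe_filter, F, Set.Finite.mem_toFinset]
      constructor
      · rintro ⟨ha, rfl⟩; exact ⟨⟨ha, hb⟩, rfl⟩
      · rintro ⟨⟨ha, -⟩, rfl⟩; exact ⟨ha, rfl⟩
    rw [← Set.ncard_coe_finset, ← hset, ← Nat.card_coe_set_eq]
    rfl
  calc (s.map fun b => Nat.card {a // a ∈ S ∧ f a = b}).sum
      = ∑ b ∈ ⟨s, hs⟩, Nat.card {a // a ∈ S ∧ f a = b} := rfl
    _ = ∑ b ∈ ⟨s, hs⟩, #{a ∈ F | f a = b} := sum_congr rfl hfiber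
    _ = #F := (card_eq_sum_card_fiberwise fun a ha => ((Set.Finite.mem_toFinset hfin).1 ha).2).symm
    _ = Nat.card {a // a ∈ S ∧ f a ∈ s} := (Nat.card_eq_card_finite_toFinset hfin).symm

theorem exp_mul_I_pow_eq_neg_one_iff (k : ℕ) (l : ℝ) :
    exp (l * I) ^ k = -1 ↔ ∃ n : ℤ, k * l = (2 * n + 1) * π := by
  rw [← Complex.exp_nat_mul, ← exp_pi_mul_I, exp_eq_exp_iff_exists_int]
  refine exists_congr fun n => ?_
  constructor <;> intro h
  · apply ofReal_injective
    apply mul_right_cancel₀ I_ne_zero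
    push_cast
    linear_combination h
  · have h' : (k * l : ℂ) = (2 * n + 1) * π := by exact_mod_cast h
    linear_combination I * h'

theorem setOf_exp_mul_I_pow_eq_neg_one {k : ℕ} (hk : k ≠ 0) (t : ℝ) :
    {l : ℝ | l ∈ Set.Ioc 0 (2 * π * t) ∧ exp (l * I) ^ k = -1} =
      (fun q : ℕ => (2 * q + 1) * π / k) '' Set.Iio ⌊k * t + 1 / 2⌋₊ := by
  have hk' : (0 : ℝ) < k := by positivity
  ext l
  simp only [Set.mem_ofPred_eq, Set.mem_Ioc, exp_mul_I_pow_eq_neg_one_iff, Set.mem_image,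
    Set.mem_Iio, Nat.lt_iff_add_one_le, Nat.le_floor_iff' (Nat.succ_ne_zero _)]
  constructor
  · rintro ⟨⟨hl0, hlt⟩, n, hn⟩
    have hn0 : 0 ≤ n := by
      have : (0 : ℝ) < (2 * n + 1) * π := hn ▸ mul_pos hk' hl0
      have : (-1 : ℝ) < n := by nlinarith [pi_pos]
      have : (-1 : ℤ) < n := by exact_mod_cast this
      omega
    lift n to ℕ using hn0
    refine ⟨n, ?_, by field_simp; push_cast at hn; linarith⟩
    push_cast at hn ⊢
    nlinarith [pi_pos]
  · rintro ⟨q, hq, rfl⟩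
    refine ⟨⟨by positivity, ?_⟩, q, by push_cast; field_simp⟩
    rw [div_le_iff₀ hk']
    push_cast at hq
    nlinarith [pi_pos]

theorem argCount_X_pow_mul (t : ℝ) (n : ℕ) {p : ℝ[X]} (hp : p ≠ 0) :
    argCount t (X ^ n * p) = argCount t p := by
  have hp' : p.map (algebraMap ℝ ℂ) ≠ 0 :=
    (Polynomial.map_ne_zero_iff (algebraMap ℝ ℂ).injective).2 hp
  simp only [argCount, Polynomial.map_mul, Polynomial.map_pow, map_X]
  rw [roots_mul (mul_ne_zero (pow_ne_zero _ X_ne_zero) hp'), roots_X_pow, Multiset.map_add,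
    Multiset.sum_add, Multiset.map_nsmul, Multiset.map_singleton, Multiset.sum_nsmul,
    Multiset.sum_singleton]
  simp [Complex.exp_ne_zero]

theorem argCount_X_pow_add_one (t : ℝ) (k : ℕ) : argCount t (X ^ k + 1) = ⌊k * t + 1 / 2⌋₊ := by
  rcases eq_or_ne k 0 with rfl | hk
  · rw [pow_zero, one_add_one_eq_two, ← C_ofNat, argCount, Polynomial.map_C, roots_C]
    simp only [Multiset.map_zero, Multiset.sum_zero, CharP.cast_eq_zero, zero_mul, zero_add]
    exact (Nat.floor_eq_zero.2 (by norm_num)).symm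
  have hroots : (X ^ k + 1 : ℂ[X]).roots = nthRoots k (-1) := by
    simp [nthRoots, sub_eq_add_neg]
  have hsep : (X ^ k + 1 : ℂ[X]).roots.Nodup := by
    rw [hroots]; exact nodup_roots (separable_X_pow_sub_C _ (by exact_mod_cast hk) (by norm_num))
  have hinj : Function.Injective fun q : ℕ => (2 * q + 1) * π / k := by
    intro q r h
    have hk' : (k : ℝ) ≠ 0 := by exact_mod_cast hk
    field_simp at h
    have : (q : ℝ) = r := by nlinarith [pi_pos]
    exact_mod_cast this
  have hset : {l : ℝ | l ∈ Set.Ioc 0 (2 * π * t) ∧ exp (l * I) ∈ (X ^ k + 1 : ℂ[X]).roots} =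
      (fun q : ℕ => (2 * q + 1) * π / k) '' Set.Iio ⌊k * t + 1 / 2⌋₊ := by
    simp only [hroots, mem_nthRoots (Nat.pos_of_ne_zero hk), setOf_exp_mul_I_pow_eq_neg_one hk t]
  have hfin :
      {l : ℝ | l ∈ Set.Ioc 0 (2 * π * t) ∧ exp (l * I) ∈ (X ^ k + 1 : ℂ[X]).roots}.Finite :=
    hset ▸ (Set.finite_Iio _).image _
  simp only [argCount, Polynomial.map_add, Polynomial.map_pow, map_X, Polynomial.map_one,
    ← and_assoc, ← Set.mem_Ioc]
  refine (sum_map_natCard_fiber (S := Set.Ioc 0 (2 * π * t)) (f := fun l : ℝ => exp (l * I))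
    hsep hfin).trans ?_
  rw [← Set.coe_ofPred, hset, Nat.card_coe_set_eq, Set.ncard_image_of_injective _ hinj,
    ← Finset.coe_range, Set.ncard_coe_finset, Finset.card_range]

theorem natFloor_add_half_eq_round {q : ℚ} (hq : 0 ≤ q) :
    (⌊(q : ℝ) + 1 / 2⌋₊ : ℤ) = round q := by
  rw [Int.natCast_floor_eq_floor (by positivity), round_eq, ← Rat.floor_cast (α := ℝ)]
  push_cast
  rfl

theorem piFn_X_pow_add_X_pow (κ d m n : ℕ) :
    piFn κ d (X ^ m + X ^ n) = ((m : ℚ) + n) * κ / d + round |(κ / d : ℚ) * (m - n)| := by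
  wlog hnm : n ≤ m generalizing m n
  · rw [add_comm, this n m (le_of_not_ge hnm), ← neg_sub (m : ℚ), mul_neg, abs_neg,
      add_comm (n : ℚ)]
  obtain ⟨k, rfl⟩ := Nat.exists_eq_add_of_le hnm
  have hfactor : (X ^ (n + k) + X ^ n : ℝ[X]) = X ^ n * (X ^ k + 1) := by ring
  have hne : (X ^ k + 1 : ℝ[X]) ≠ 0 := fun h => by simpa using congrArg (eval 1) h
  have hmult : rootMultiplicity 0 (X ^ n * (X ^ k + 1) : ℝ[X]) = n := by
    have h := rootMultiplicity_mul_X_sub_C_pow hne (a := 0) (n := n)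
    rw [map_zero, sub_zero] at h
    rw [mul_comm, h, rootMultiplicity_eq_zero (by simp; positivity), zero_add]
  have hcount : (argCount (κ / d) (X ^ k + 1) : ℚ) = round |(κ / d : ℚ) * k| := by
    rw [argCount_X_pow_add_one, abs_of_nonneg (by positivity),
      ← natFloor_add_half_eq_round (by positivity)]
    push_cast
    ring_nf
  rw [piFn, hfactor, hmult, rootMultiplicity_eq_zero (by simp),
    natDegree_mul (pow_ne_zero _ X_ne_zero) hne, natDegree_X_pow, ← C_1, natDegree_X_pow_add_C,
    C_1, argCount_X_pow_mul _ _ hne, hcount]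
  push_cast
  ring_nf

section Round

variable {K : Type*} [Field K] [LinearOrder K] [IsStrictOrderedRing K] [FloorRing K]

theorem round_abs_natCast_sub_sub_round_abs_of_lt_half (κ : ℕ) {x : K} (hx : x < 1 / 2) :
    round |κ - x| - round |x| = κ := by
  rcases le_or_gt x 0 with hx0 | hx0
  · rw [abs_of_nonpos hx0, abs_of_nonneg (by linarith [κ.cast_nonneg (α := K)]),
      sub_eq_add_neg (κ : K), round_natCast_add, add_sub_cancel_right]
  · have hdist := abs_abs_sub_abs_le_abs_sub ((κ : K) - x) κ
    rw [sub_sub_cancel_left, abs_neg, Nat.abs_cast, abs_of_pos hx0, abs_le] at hdist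
    rw [abs_of_pos hx0, round_eq_zero_iff.2 ⟨by linarith, hx⟩, sub_zero, round_eq_iff]
    push_cast
    constructor <;> linarith [hdist.1, hdist.2]

theorem round_abs_natCast_sub_sub_round_abs_of_gt (κ : ℕ) {x : K} (hx : κ - 1 / 2 < x) :
    round |κ - x| - round |x| = -κ := by
  have h := round_abs_natCast_sub_sub_round_abs_of_lt_half κ (x := κ - x) (by linarith)
  rw [sub_sub_cancel] at h
  linarith

theorem round_abs_sub_sub_round_abs_of_eq (κ a : ℤ) {x β : K} (hx : x = a + β - 1 / 2)
    (hβ0 : 0 ≤ β) (hβ1 : β < 1) (hx0 : 0 ≤ x) (hxκ : x ≤ κ) :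
    round |κ - x| - round |x| = κ - 2 * a + if β = 0 then 1 else 0 := by
  have hx_round : round x = a := round_eq_iff.2 ⟨by linarith, by linarith⟩
  -- `κ - x = (κ - a) + (1/2 - β)` is a half-integer, which `round` rounds up, exactly when `β = 0`.
  have hκx_round : round ((κ : K) - x) = κ - a + if β = 0 then 1 else 0 := by
    rw [round_eq_iff]
    split_ifs with hβ
    · push_cast; constructor <;> linarith
    · have hβpos : 0 < β := lt_of_le_of_ne hβ0 (Ne.symm hβ)
      push_cast; constructor <;> linarith
  rw [abs_of_nonneg hx0, abs_of_nonneg (sub_nonneg.2 hxκ), hx_round, hκx_round]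
  ring

end Round

theorem piFn_shift_sub_piFn (κ : ℕ) {d : ℕ} (hd : d ≠ 0) (i j : ℕ) :
    piFn κ d (X ^ (i + d) + X ^ j) - piFn κ d (X ^ i + X ^ j) =
      κ + (round |κ - κ * ((j : ℚ) - i) / d| - round |κ * ((j : ℚ) - i) / d| : ℤ) := by
  have hd' : (d : ℚ) ≠ 0 := by exact_mod_cast hd
  have hshift : (κ / d : ℚ) * ((i + d : ℕ) - j) = κ - κ * ((j : ℚ) - i) / d := by
    push_cast; field_simp; ring
  have hbase : (κ / d : ℚ) * (i - j) = -(κ * ((j : ℚ) - i) / d) := by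
    field_simp; ring
  rw [piFn_X_pow_add_X_pow, piFn_X_pow_add_X_pow, hshift, hbase, abs_neg]
  push_cast
  field_simp
  ring

theorem piFn_shift_add_general (κ d : ℕ) (hd : 2 ≤ d) (i j : ℕ) (a : ℤ) (b : ℚ)
    (hab : (κ : ℚ) * ((j : ℚ) - (i : ℚ)) = (a : ℚ) * (d : ℚ) + b - (d : ℚ) / 2)
    (hb0 : 0 ≤ b) (hbd : b < (d : ℚ)) :
    (-(d : ℤ) < 2 * (κ : ℤ) * ((i : ℤ) - (j : ℤ)) →
      piFn κ d (X ^ (i + d) + X ^ j) - piFn κ d (X ^ i + X ^ j) = 2 * (κ : ℚ)) ∧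
    ((d : ℤ) - 2 * (κ : ℤ) * (d : ℤ) ≤ 2 * (κ : ℤ) * ((i : ℤ) - (j : ℤ)) →
      2 * (κ : ℤ) * ((i : ℤ) - (j : ℤ)) ≤ -(d : ℤ) →
      piFn κ d (X ^ (i + d) + X ^ j) - piFn κ d (X ^ i + X ^ j) =
        if b = 0 then 2 * ((κ : ℚ) - (a : ℚ)) + 1 else 2 * ((κ : ℚ) - (a : ℚ))) ∧
    (2 * (κ : ℤ) * ((i : ℤ) - (j : ℤ)) < (d : ℤ) - 2 * (κ : ℤ) * (d : ℤ) →
      piFn κ d (X ^ (i + d) + X ^ j) - piFn κ d (X ^ i + X ^ j) = 0) := by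
  have hd0 : (0 : ℚ) < d := by exact_mod_cast (by omega : 0 < d)
  rw [piFn_shift_sub_piFn κ (by omega) i j]
  set x : ℚ := κ * ((j : ℚ) - i) / d
  refine ⟨fun h => ?_, fun h₁ h₂ => ?_, fun h => ?_⟩
  · have h' : -(d : ℚ) < 2 * κ * ((i : ℚ) - j) := by exact_mod_cast h
    have hx : x < 1 / 2 := by rw [div_lt_iff₀ hd0]; linarith
    rw [round_abs_natCast_sub_sub_round_abs_of_lt_half κ hx]
    push_cast
    ring
  · have h₁' : (d : ℚ) - 2 * κ * d ≤ 2 * κ * ((i : ℚ) - j) := by exact_mod_cast h₁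
    have h₂' : 2 * κ * ((i : ℚ) - j) ≤ -(d : ℚ) := by exact_mod_cast h₂
    have hx_eq : x = a + b / d - 1 / 2 := by
      simp only [x]; rw [hab]; field_simp
    have h := round_abs_sub_sub_round_abs_of_eq (κ : ℤ) a hx_eq (div_nonneg hb0 hd0.le)
      ((div_lt_one hd0).2 hbd) (by rw [le_div_iff₀ hd0]; linarith)
      (by push_cast; rw [div_le_iff₀ hd0]; linarith)
    rw [Int.cast_natCast] at h
    rw [h]
    simp only [div_eq_zero_iff, hd0.ne', or_false]
    split_ifs <;> push_cast <;> ring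
  · have h' : 2 * κ * ((i : ℚ) - j) < d - 2 * κ * d := by exact_mod_cast h
    have hx : κ - 1 / 2 < x := by rw [lt_div_iff₀ hd0]; linarith
    rw [round_abs_natCast_sub_sub_round_abs_of_gt κ hx]
    push_cast
    ring

/-- Proposition 8.2, second equation: writing `κ(j−i) = ad + b − d/2` with `a` an integer and
`b` a half-integer satisfying `0 ≤ b < d`, the difference
`π_{κ/d}(q^{i+d} + q^j) − π_{κ/d}(q^i + q^j)` equals `2κ` if `2κ(i−j) > −d`, equals
`2(κ − a) + δ_{0,b}` if `d − 2κd ≤ 2κ(i−j) ≤ −d`, and equals `0` if `2κ(i−j) < d − 2κd`. -/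
theorem piFn_shift_add (κ d : ℕ) (hd : 2 ≤ d) (hκ : 1 ≤ κ) (hcop : Nat.Coprime κ d)
    (i j : ℕ) (a : ℤ) (b : ℚ) (hbhalf : ∃ m : ℤ, 2 * b = (m : ℚ))
    (hab : (κ : ℚ) * ((j : ℚ) - (i : ℚ)) = (a : ℚ) * (d : ℚ) + b - (d : ℚ) / 2)
    (hb0 : 0 ≤ b) (hbd : b < (d : ℚ)) :
    (-(d : ℤ) < 2 * (κ : ℤ) * ((i : ℤ) - (j : ℤ)) →
      piFn κ d (X ^ (i + d) + X ^ j) - piFn κ d (X ^ i + X ^ j) = 2 * (κ : ℚ)) ∧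
    ((d : ℤ) - 2 * (κ : ℤ) * (d : ℤ) ≤ 2 * (κ : ℤ) * ((i : ℤ) - (j : ℤ)) →
      2 * (κ : ℤ) * ((i : ℤ) - (j : ℤ)) ≤ -(d : ℤ) →
      piFn κ d (X ^ (i + d) + X ^ j) - piFn κ d (X ^ i + X ^ j) =
        if b = 0 then 2 * ((κ : ℚ) - (a : ℚ)) + 1 else 2 * ((κ : ℚ) - (a : ℚ))) ∧
    (2 * (κ : ℤ) * ((i : ℤ) - (j : ℤ)) < (d : ℤ) - 2 * (κ : ℤ) * (d : ℤ) →
      piFn κ d (X ^ (i + d) + X ^ j) - piFn κ d (X ^ i + X ^ j) = 0) :=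
  piFn_shift_add_general κ d hd i j a b hab hb0 hbd
end

section
/- Let d ≥ 2 and κ ≥ 1 be coprime integers, and let e = d if 4 divides d, e = 2d if d is odd, and e = d/2 if d ≡ 2 (mod 4). For all integers i > j ≥ 0, π_{κ/d}((−q)^{i+e} − (−q)^j) − π_{κ/d}((−q)^i − (−q)^j) = 2κe/d. -/
/-
Write `i = j + m`. Over `ℂ`, `(-q)^(j+m) - (-q)^j = ±q^j (q^m - (-1)^m)` has a `j`-fold root at `0`
and simple roots at the `m`-th roots of `(-1)^m`, which are the `e^{iλ}` with
`λ ∈ 2π(ℤ + m/2)/m`. Counting these `λ` in `(0, 2πκ/d]` gives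
`π_{κ/d} = (2j + m)κ/d + ⌊m(κ/d - 1/2)⌋ + (m + 1)/2`. The hypothesis on `e` says exactly that
`e(κ/d - 1/2)` is an integer, so replacing `m` by `m + e` shifts the floor by that integer and the
difference is `eκ/d + e(κ/d - 1/2) + e/2 = 2κe/d`.
-/

open Polynomial

theorem neg_X_pow_add_sub_neg_X_pow {R : Type*} [CommRing R] (j m : ℕ) :
    ((-X) ^ (j + m) - (-X) ^ j : R[X]) = C ((-1) ^ (j + m)) * (X ^ j * (X ^ m - C ((-1) ^ m))) := by
  simp only [map_pow, map_neg, map_one]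
  ring_nf
  rw [mul_comm m 2, pow_mul, neg_one_sq, one_pow, mul_one]

section Field

variable {K : Type*} [Field K] {j m : ℕ}

theorem natDegree_neg_X_pow_add_sub_neg_X_pow (hm : 0 < m) :
    ((-X) ^ (j + m) - (-X) ^ j : K[X]).natDegree = j + m := by
  rw [neg_X_pow_add_sub_neg_X_pow, natDegree_C_mul (by simp),
    natDegree_mul (pow_ne_zero _ X_ne_zero) (X_pow_sub_C_ne_zero hm _),
    natDegree_pow, natDegree_X, natDegree_X_pow_sub_C, mul_one]

theorem neg_X_pow_add_sub_neg_X_pow_ne_zero (hm : 0 < m) :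
    ((-X) ^ (j + m) - (-X) ^ j : K[X]) ≠ 0 := by
  rw [neg_X_pow_add_sub_neg_X_pow]
  exact mul_ne_zero (by simp) (mul_ne_zero (pow_ne_zero _ X_ne_zero) (X_pow_sub_C_ne_zero hm _))

theorem rootMultiplicity_neg_X_pow_add_sub_neg_X_pow (hm : 0 < m) (a : K) :
    ((-X) ^ (j + m) - (-X) ^ j : K[X]).rootMultiplicity a =
      (X ^ j : K[X]).rootMultiplicity a + (X ^ m - C ((-1) ^ m) : K[X]).rootMultiplicity a := by
  have hne := neg_X_pow_add_sub_neg_X_pow_ne_zero (K := K) (j := j) hm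
  rw [neg_X_pow_add_sub_neg_X_pow] at hne ⊢
  rw [rootMultiplicity_mul hne, rootMultiplicity_C, zero_add,
    rootMultiplicity_mul (right_ne_zero_of_mul hne)]

theorem rootMultiplicity_zero_neg_X_pow_add_sub_neg_X_pow (hm : 0 < m) :
    ((-X) ^ (j + m) - (-X) ^ j : K[X]).rootMultiplicity 0 = j := by
  have h : ¬(X ^ m - C ((-1) ^ m) : K[X]).IsRoot 0 := by simp [hm.ne']
  rw [rootMultiplicity_neg_X_pow_add_sub_neg_X_pow hm, rootMultiplicity_eq_zero h, add_zero]
  simpa using rootMultiplicity_X_sub_C_pow (0 : K) j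

theorem rootMultiplicity_one_neg_X_pow_add_sub_neg_X_pow [CharZero K] (hm : 0 < m) :
    ((-X) ^ (j + m) - (-X) ^ j : K[X]).rootMultiplicity 1 = if Even m then 1 else 0 := by
  rw [rootMultiplicity_neg_X_pow_add_sub_neg_X_pow hm, rootMultiplicity_eq_zero (by simp), zero_add]
  have hsep : (X ^ m - C ((-1) ^ m) : K[X]).Separable :=
    separable_X_pow_sub_C _ (by exact_mod_cast hm.ne') (by simp)
  split_ifs with hev
  · refine le_antisymm (rootMultiplicity_le_one_of_separable hsep 1) ?_
    exact (rootMultiplicity_pos (X_pow_sub_C_ne_zero hm _)).mpr (by simp [hev.neg_one_pow])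
  · refine rootMultiplicity_eq_zero ?_
    simp [(Nat.not_even_iff_odd.mp hev).neg_one_pow]

theorem roots_neg_X_pow_add_sub_neg_X_pow [CharZero K] (hm : 0 < m) :
    ((-X) ^ (j + m) - (-X) ^ j : K[X]).roots = j • {0} + (nthRootsFinset m ((-1) ^ m : K)).val := by
  classical
  have hne := neg_X_pow_add_sub_neg_X_pow_ne_zero (K := K) (j := j) hm
  have hnodup : (nthRoots m ((-1) ^ m : K)).Nodup :=
    nodup_roots (separable_X_pow_sub_C _ (by exact_mod_cast hm.ne') (by simp))
  rw [neg_X_pow_add_sub_neg_X_pow] at hne ⊢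
  rw [roots_C_mul _ (by simp), roots_mul (right_ne_zero_of_mul hne), roots_pow,
    roots_X, nthRootsFinset_def, Multiset.toFinset_val, hnodup.dedup]
  rfl

end Field

theorem Finset.sum_natCard_fiber {α β : Type*} [DecidableEq β] (p : α → Prop) (g : α → β)
    (F : Finset β) (hfin : {a | p a ∧ g a ∈ F}.Finite) :
    ∑ b ∈ F, Nat.card {a // p a ∧ g a = b} = Nat.card {a // p a ∧ g a ∈ F} := by
  have hfiber (b : β) (hb : b ∈ F) : Nat.card {a // p a ∧ g a = b} =
      (hfin.toFinset.filter (g · = b)).card := by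
    rw [← Set.ncard_coe_finset, ← Nat.card_coe_set_eq]
    congr
    ext a
    simp only [Finset.coe_filter, Set.Finite.mem_toFinset]
    grind
  rw [Finset.sum_congr rfl hfiber, ← card_eq_sum_card_fiberwise (fun a ha => by simp_all),
    ← Set.ncard_coe_finset, Set.Finite.coe_toFinset, ← Nat.card_coe_set_eq]
  rfl

theorem argCount_eq_natCard (t : ℝ) (f : ℝ[X]) (j : ℕ) (F : Finset ℂ)
    (hroots : (f.map (algebraMap ℝ ℂ)).roots = j • {0} + F.val)
    (hfin : {l : ℝ | (0 < l ∧ l ≤ 2 * Real.pi * t) ∧ Complex.exp (l * Complex.I) ∈ F}.Finite) :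
    argCount t f =
      Nat.card {l : ℝ // (0 < l ∧ l ≤ 2 * Real.pi * t) ∧ Complex.exp (l * Complex.I) ∈ F} := by
  classical
  have hzero : Nat.card {l : ℝ // 0 < l ∧ l ≤ 2 * Real.pi * t ∧
      Complex.exp (l * Complex.I) = 0} = 0 := by
    simp [Complex.exp_ne_zero]
  rw [argCount, hroots, Multiset.map_add, Multiset.sum_add, Multiset.map_nsmul,
    Multiset.sum_nsmul, Multiset.map_singleton, Multiset.sum_singleton, hzero, smul_zero, zero_add,
    ← Finset.sum_eq_multiset_sum, ← Finset.sum_natCard_fiber _ _ _ hfin]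
  simp only [and_assoc]

section Arguments

open Complex

theorem exp_mul_I_pow_eq_neg_one_pow_iff {m : ℕ} (hm : m ≠ 0) (l : ℝ) :
    exp (l * I) ^ m = (-1) ^ m ↔ ∃ k : ℤ, 2 * Real.pi * (k + m / 2) / m = l := by
  have hmC : (m : ℂ) ≠ 0 := by exact_mod_cast hm
  rw [← exp_pi_mul_I, ← exp_nat_mul, ← exp_nat_mul, exp_eq_exp_iff_exists_int]
  refine exists_congr fun k => ?_
  rw [← ofReal_inj]
  push_cast
  constructor
  · intro h
    have h' : (m * l : ℂ) * I = (2 * Real.pi * (k + m / 2)) * I := by linear_combination h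
    field_simp
    linear_combination -(mul_right_cancel₀ I_ne_zero h')
  · intro h
    rw [← h]
    field_simp
    ring

theorem two_pi_mul_add_half_div_mem_Ioc_iff {m : ℕ} (hm : 0 < m) (t : ℝ) (k : ℤ) :
    (0 < 2 * Real.pi * (k + m / 2) / m ∧ 2 * Real.pi * (k + m / 2) / m ≤ 2 * Real.pi * t) ↔
      k ∈ Set.Ioc ⌊-(m / 2 : ℝ)⌋ ⌊m * (t - 1 / 2)⌋ := by
  have hmR : (0 : ℝ) < m := by exact_mod_cast hm
  have hpi := Real.pi_pos
  rw [Set.mem_Ioc, Int.floor_lt, Int.le_floor, div_pos_iff_of_pos_right hmR, div_le_iff₀ hmR,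
    mul_pos_iff_of_pos_left (by positivity), mul_assoc (2 * Real.pi) t,
    mul_le_mul_iff_right₀ (by positivity)]
  constructor <;> rintro ⟨h1, h2⟩ <;> constructor <;> linarith

theorem two_pi_mul_add_half_div_injective {m : ℕ} (hm : 0 < m) :
    Function.Injective fun k : ℤ => 2 * Real.pi * (k + m / 2) / m := by
  intro a b h
  have hmR : (m : ℝ) ≠ 0 := by exact_mod_cast hm.ne'
  have : (a : ℝ) = b := by
    simp only at h
    field_simp at h
    linarith
  exact_mod_cast this

theorem setOf_arg_mem_nthRootsFinset {m : ℕ} (hm : 0 < m) (t : ℝ) :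
    {l : ℝ | (0 < l ∧ l ≤ 2 * Real.pi * t) ∧ exp (l * I) ∈ nthRootsFinset m ((-1) ^ m : ℂ)} =
      (fun k : ℤ => 2 * Real.pi * (k + m / 2) / m) '' Set.Ioc ⌊-(m / 2 : ℝ)⌋ ⌊m * (t - 1 / 2)⌋ := by
  ext l
  simp only [Set.mem_ofPred_eq, mem_nthRootsFinset hm, exp_mul_I_pow_eq_neg_one_pow_iff hm.ne',
    Set.mem_image]
  constructor
  · rintro ⟨hl, k, rfl⟩
    exact ⟨k, (two_pi_mul_add_half_div_mem_Ioc_iff hm t k).mp hl, rfl⟩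
  · rintro ⟨k, hk, rfl⟩
    exact ⟨(two_pi_mul_add_half_div_mem_Ioc_iff hm t k).mpr hk, k, rfl⟩

end Arguments

theorem argCount_neg_X_pow_add_sub_neg_X_pow {t : ℝ} (ht : 0 ≤ t) {m : ℕ} (hm : 0 < m) (j : ℕ) :
    (argCount t ((-X) ^ (j + m) - (-X) ^ j) : ℤ) = ⌊m * (t - 1 / 2)⌋ + ⌈(m / 2 : ℝ)⌉ := by
  have hset := setOf_arg_mem_nthRootsFinset hm t
  have hroots : (((-X) ^ (j + m) - (-X) ^ j : ℝ[X]).map (algebraMap ℝ ℂ)).roots =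
      j • {0} + (nthRootsFinset m ((-1) ^ m : ℂ)).val := by
    simpa using roots_neg_X_pow_add_sub_neg_X_pow (K := ℂ) (j := j) hm
  have hle : ⌊-(m / 2 : ℝ)⌋ ≤ ⌊m * (t - 1 / 2)⌋ := Int.floor_mono (by nlinarith)
  have hcard : Nat.card {l : ℝ // (0 < l ∧ l ≤ 2 * Real.pi * t) ∧
      Complex.exp (l * Complex.I) ∈ nthRootsFinset m ((-1) ^ m : ℂ)} =
      Nat.card (Set.Ioc ⌊-(m / 2 : ℝ)⌋ ⌊m * (t - 1 / 2)⌋) :=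
    Nat.card_congr ((Equiv.setCongr hset).trans
      (Equiv.Set.image _ _ (two_pi_mul_add_half_div_injective hm)).symm)
  rw [argCount_eq_natCard t _ j _ hroots (hset ▸ (Set.finite_Ioc _ _).image _), hcard,
    Nat.card_eq_fintype_card, Int.card_fintype_Ioc_of_le _ _ hle, Int.floor_neg]
  ring

theorem ceil_natCast_div_two_add_ite_even (m : ℕ) :
    (⌈(m / 2 : ℝ)⌉ : ℚ) + ((if Even m then 1 else 0 : ℕ) : ℚ) / 2 = (m + 1) / 2 := by
  rcases Nat.even_or_odd' m with ⟨k, rfl | rfl⟩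
  · rw [show ⌈(((2 * k : ℕ) : ℝ) / 2)⌉ = k by push_cast; simp, if_pos (even_two_mul k)]
    push_cast
    ring
  · rw [show ⌈(((2 * k + 1 : ℕ) : ℝ) / 2)⌉ = k + 1 by
      rw [Int.ceil_eq_iff]; push_cast; constructor <;> linarith,
      if_neg (Nat.not_even_iff_odd.mpr (odd_two_mul_add_one k))]
    push_cast
    ring

theorem piFn_neg_X_pow_add_sub_neg_X_pow (κ d : ℕ) {m : ℕ} (hm : 0 < m) (j : ℕ) :
    piFn κ d ((-X) ^ (j + m) - (-X) ^ j) =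
      (2 * j + m) * (κ / d) + ⌊(m : ℚ) * (κ / d - 1 / 2)⌋ + (m + 1) / 2 := by
  have hfloor : ⌊(m : ℝ) * ((κ : ℝ) / d - 1 / 2)⌋ = ⌊(m : ℚ) * (κ / d - 1 / 2)⌋ := by
    rw [← Rat.floor_cast (α := ℝ)]
    push_cast
    rfl
  have hcount := argCount_neg_X_pow_add_sub_neg_X_pow (t := κ / d) (by positivity) hm j
  rw [piFn, rootMultiplicity_zero_neg_X_pow_add_sub_neg_X_pow hm,
    natDegree_neg_X_pow_add_sub_neg_X_pow hm, rootMultiplicity_one_neg_X_pow_add_sub_neg_X_pow hm,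
    ← ceil_natCast_div_two_add_ite_even m, ← Int.cast_natCast (argCount _ _), hcount, hfloor]
  push_cast
  ring

theorem exists_int_eq_mul_div_sub_half {κ d e : ℕ} (hcop : κ.Coprime d)
    (he : (4 ∣ d ∧ e = d) ∨ (d % 2 = 1 ∧ e = 2 * d) ∨ (d % 4 = 2 ∧ 2 * e = d)) :
    ∃ n : ℤ, (e : ℚ) * (κ / d - 1 / 2) = n := by
  rcases he with ⟨⟨c, rfl⟩, rfl⟩ | ⟨hodd, rfl⟩ | ⟨hmod, rfl⟩
  · rcases Nat.eq_zero_or_pos c with rfl | hc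
    · exact ⟨0, by simp⟩
    · refine ⟨κ - 2 * c, ?_⟩
      have : (c : ℚ) ≠ 0 := by positivity
      push_cast
      field_simp
      ring
  · have : (d : ℚ) ≠ 0 := by exact_mod_cast (show d ≠ 0 by omega)
    refine ⟨2 * κ - d, ?_⟩
    push_cast
    field_simp
  · obtain ⟨a, rfl⟩ : Odd κ := (hcop.coprime_dvd_right (dvd_mul_right 2 e)).odd_of_right
    obtain ⟨b, rfl⟩ : Odd e := Nat.odd_iff.mpr (by omega)
    refine ⟨a - b, ?_⟩
    have : (2 * b + 1 : ℚ) ≠ 0 := by positivity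
    push_cast
    field_simp
    ring

theorem piFn_shift_unitary_general (κ d : ℕ) (hcop : Nat.Coprime κ d)
    (e : ℕ)
    (he : (4 ∣ d ∧ e = d) ∨ (d % 2 = 1 ∧ e = 2 * d) ∨ (d % 4 = 2 ∧ 2 * e = d))
    (i j : ℕ) (hij : j < i) :
    piFn κ d ((-X) ^ (i + e) - (-X) ^ j) - piFn κ d ((-X) ^ i - (-X) ^ j) =
      2 * (κ : ℚ) * (e : ℚ) / (d : ℚ) := by
  obtain ⟨m, rfl⟩ : ∃ m, i = j + m := ⟨i - j, by omega⟩
  obtain ⟨n, hn⟩ := exists_int_eq_mul_div_sub_half hcop he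
  have hfloor : ⌊((m + e : ℕ) : ℚ) * (κ / d - 1 / 2)⌋ = ⌊(m : ℚ) * (κ / d - 1 / 2)⌋ + n := by
    rw [← Int.floor_add_intCast, ← hn]
    push_cast
    ring_nf
  rw [add_assoc, piFn_neg_X_pow_add_sub_neg_X_pow κ d (by omega),
    piFn_neg_X_pow_add_sub_neg_X_pow κ d (by omega), hfloor]
  push_cast
  linear_combination -hn

/-- Proposition 8.3, first equation: with `e = d` if `4 ∣ d`, `e = 2d` if `d` is odd, and
`e = d/2` if `d ≡ 2 (mod 4)`, for integers `i > j ≥ 0` one has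
`π_{κ/d}((−q)^{i+e} − (−q)^j) − π_{κ/d}((−q)^i − (−q)^j) = 2κe/d`. -/
theorem piFn_shift_unitary (κ d : ℕ) (hd : 2 ≤ d) (hκ : 1 ≤ κ) (hcop : Nat.Coprime κ d)
    (e : ℕ)
    (he : (4 ∣ d ∧ e = d) ∨ (d % 2 = 1 ∧ e = 2 * d) ∨ (d % 4 = 2 ∧ 2 * e = d))
    (i j : ℕ) (hij : j < i) :
    piFn κ d ((-X) ^ (i + e) - (-X) ^ j) - piFn κ d ((-X) ^ i - (-X) ^ j) =
      2 * (κ : ℚ) * (e : ℚ) / (d : ℚ) :=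
  piFn_shift_unitary_general κ d hcop e he i j hij
end

section
/- Let d ≥ 3 and κ ≥ 1 be coprime integers, and let e = d if 4 divides d, e = 2d if d is odd, and e = d/2 if d ≡ 2 (mod 4). Then π_{κ/d}((−q)^e + q) − π_{κ/d}(q + 1) = 2κe/d − 2⌊2κ/d⌋ + 2⌊κ/d⌋, and this quantity is positive. (For d = 2 and κ odd, the quantity 2κe/d − 2⌊2κ/d⌋ + 2⌊κ/d⌋ equals −1.) -/
open Polynomial

/-! The complex roots of `(-q)^e + q` are `0` and the `(e-1)`-th roots of `-(-1)^e`, and an angle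
`λ` has `(e^{iλ})^{e-1} = -(-1)^e` iff `(e-1)λ` is an angle of `-(-1)^e`. Hence, for `t ≥ 0`,
`|Arg_t((-q)^e + q)|` counts the angles of `±1` in `(0, 2π(e-1)t]`: it is `⌊(e-1)t + 1/2⌋` for even
`e` and `⌊(e-1)t⌋` for odd `e`, while `|Arg_t(q+1)| = ⌊t + 1/2⌋`. For `t = κ/d` the choice of `e`
makes `e(t - 1/2)` an integer, and coprimality keeps `t + 1/2` off the integers, so in both cases
`π_t((-q)^e + q) = (1 + 2e)t - ⌊t + 1/2⌋`. Hermite's identity `⌊2t⌋ = ⌊t⌋ + ⌊t + 1/2⌋` gives the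
formula, and `⌊t + 1/2⌋ ≤ 2t < et` its positivity. -/

open Complex Real

noncomputable def expCount (M : ℝ) (ξ : ℂ) : ℕ :=
  Nat.card {l : ℝ // 0 < l ∧ l ≤ M ∧ exp (l * I) = ξ}

lemma argCount_eq_sum_expCount (t : ℝ) (f : ℝ[X]) :
    argCount t f = ((f.map (algebraMap ℝ ℂ)).roots.map (expCount (2 * π * t))).sum :=
  rfl

lemma expFiber_eq_image (s c : ℝ) :
    {l : ℝ | 0 < l ∧ l ≤ 2 * π * s ∧ exp (l * I) = exp ((2 * π * c : ℝ) * I)} =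
      (fun j : ℤ => 2 * π * (c + j)) '' Set.Ioc ⌊-c⌋ ⌊s - c⌋ := by
  ext l
  simp only [Set.mem_ofPred_eq, Set.mem_image, Set.mem_Ioc, Int.floor_lt, Int.le_floor,
    exp_eq_exp_iff_exists_int]
  constructor
  · rintro ⟨hl0, hls, j, hj⟩
    have hl : l = 2 * π * (c + j) := by
      have : (l : ℂ) = (2 * π * (c + j) : ℝ) := by
        apply mul_right_cancel₀ I_ne_zero
        push_cast at hj ⊢
        linear_combination hj
      exact_mod_cast this
    subst hl
    refine ⟨j, ⟨?_, ?_⟩, rfl⟩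
    · nlinarith [pi_pos]
    · nlinarith [pi_pos]
  · rintro ⟨j, ⟨hj0, hjs⟩, rfl⟩
    refine ⟨by nlinarith [pi_pos], by nlinarith [pi_pos], j, ?_⟩
    push_cast
    ring

lemma expCount_two_pi_mul_exp (s c : ℝ) :
    expCount (2 * π * s) (exp ((2 * π * c : ℝ) * I)) = (⌊s - c⌋ - ⌊-c⌋).toNat := by
  have hinj : Function.Injective fun j : ℤ => 2 * π * (c + j) := fun i j h => by
    simpa [pi_ne_zero] using h
  rw [expCount, ← Set.coe_ofPred, expFiber_eq_image, Nat.card_image_of_injective hinj,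
    Nat.card_eq_fintype_card]
  simp

instance finite_expFiber (M : ℝ) (ξ : ℂ) :
    Finite {l : ℝ // 0 < l ∧ l ≤ M ∧ exp (l * I) = ξ} := by
  by_cases h : ∃ l₀ : ℝ, exp (l₀ * I) = ξ
  · obtain ⟨l₀, rfl⟩ := h
    have hM : M = 2 * π * (M / (2 * π)) := by field_simp
    have hl₀ : l₀ = 2 * π * (l₀ / (2 * π)) := by field_simp
    rw [← Set.coe_ofPred, hM, hl₀, expFiber_eq_image]
    exact ((Set.finite_Ioc _ _).image _).to_subtype
  · push Not at h
    have : IsEmpty {l : ℝ // 0 < l ∧ l ≤ M ∧ exp (l * I) = ξ} := ⟨fun l => h l.1 l.2.2.2⟩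
    infer_instance

lemma expCount_zero (M : ℝ) : expCount M 0 = 0 :=
  have : IsEmpty {l : ℝ // 0 < l ∧ l ≤ M ∧ exp (l * I) = 0} := ⟨fun l => exp_ne_zero _ l.2.2.2⟩
  Nat.card_of_isEmpty

lemma sum_expCount_nthRoots {n : ℕ} (hn : 0 < n) {a : ℂ} (ha : a ≠ 0) (M : ℝ) :
    ((nthRoots n a).map (expCount M)).sum = expCount (n * M) a := by
  classical
  have hsum : ((nthRoots n a).map (expCount M)).sum = ∑ ξ : nthRootsFinset n a, expCount M ξ := by
    rw [Finset.sum_coe_sort, Finset.sum_eq_multiset_sum, nthRootsFinset_def, Multiset.toFinset_val,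
      ((isPrimitiveRoot_exp n hn.ne').nthRoots_nodup ha).dedup]
  let root (l : {l : ℝ // 0 < l ∧ l ≤ M ∧ exp (l * I) ^ n = a}) : nthRootsFinset n a :=
    ⟨exp (l.1 * I), (mem_nthRootsFinset hn a).2 l.2.2.2⟩
  let fiber (ξ : nthRootsFinset n a) :
      {l // root l = ξ} ≃ {l : ℝ // 0 < l ∧ l ≤ M ∧ exp (l * I) = ξ} :=
    { toFun := fun l => ⟨l.1.1, l.1.2.1, l.1.2.2.1, congrArg Subtype.val l.2⟩
      invFun := fun l =>
        ⟨⟨l.1, l.2.1, l.2.2.1, by rw [l.2.2.2]; exact (mem_nthRootsFinset hn a).1 ξ.2⟩,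
          Subtype.ext l.2.2.2⟩
      left_inv := fun _ => rfl
      right_inv := fun _ => rfl }
  have hn₀ : (0 : ℝ) < n := by positivity
  let scale : {l : ℝ // 0 < l ∧ l ≤ M ∧ exp (l * I) ^ n = a} ≃
      {u : ℝ // 0 < u ∧ u ≤ n * M ∧ exp (u * I) = a} :=
    (Equiv.mulLeft₀ (n : ℝ) hn₀.ne').subtypeEquiv fun l => by
      have hexp : exp (l * I) ^ n = exp (((n * l : ℝ) : ℂ) * I) := by
        rw [← Complex.exp_nat_mul]; push_cast; ring_nf
      change _ ↔ 0 < n * l ∧ n * l ≤ n * M ∧ exp (((n * l : ℝ) : ℂ) * I) = a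
      rw [hexp, mul_pos_iff_of_pos_left hn₀, mul_le_mul_iff_right₀ hn₀]
  -- Sort the angles `l` with `exp (l * I) ^ n = a` by the root `exp (l * I)`, then rescale by `n`.
  simp only [hsum, expCount]
  rw [← Nat.card_sigma, Nat.card_congr
    (((Equiv.sigmaCongrRight fiber).symm.trans (Equiv.sigmaFiberEquiv root)).trans scale)]

lemma expCount_one {s : ℝ} (hs : 0 ≤ s) : (expCount (2 * π * s) 1 : ℤ) = ⌊s⌋ := by
  have h := expCount_two_pi_mul_exp s 0
  simp only [mul_zero, ofReal_zero, zero_mul, Complex.exp_zero, sub_zero, neg_zero,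
    Int.floor_zero] at h
  rw [h, Int.toNat_of_nonneg (Int.floor_nonneg.2 hs)]

lemma expCount_neg_one {s : ℝ} (hs : 0 ≤ s) : (expCount (2 * π * s) (-1) : ℤ) = ⌊s + 1 / 2⌋ := by
  have h := expCount_two_pi_mul_exp s (1 / 2)
  have hfloor : ⌊-(1 / 2 : ℝ)⌋ = -1 := by norm_num [Int.floor_eq_iff]
  rw [show ((2 * π * (1 / 2) : ℝ) : ℂ) * I = π * I by push_cast; ring, exp_pi_mul_I, hfloor] at h
  have hshift : ⌊s - 1 / 2⌋ - -1 = ⌊s + 1 / 2⌋ := by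
    rw [sub_neg_eq_add, ← Int.floor_add_one]; ring_nf
  rw [h, hshift, Int.toNat_of_nonneg (Int.floor_nonneg.2 (by linarith))]

lemma map_neg_X_pow_add_X {e : ℕ} (he : 1 ≤ e) :
    ((-X) ^ e + X : ℝ[X]).map (algebraMap ℝ ℂ) =
      C ((-1) ^ e) * (X * (X ^ (e - 1) - C (-(-1) ^ e))) := by
  obtain ⟨n, rfl⟩ : ∃ n, e = n + 1 := ⟨e - 1, by omega⟩
  have hsq : ((-1 : ℂ[X]) ^ (n + 1)) ^ 2 = 1 := by rw [← pow_mul, mul_comm, pow_mul]; simp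
  simp only [Polynomial.map_add, Polynomial.map_pow, Polynomial.map_neg, map_X, map_pow, map_neg,
    map_one, Nat.add_sub_cancel]
  linear_combination (-X) * hsq

lemma roots_map_neg_X_pow_add_X {e : ℕ} (he : 2 ≤ e) :
    (((-X) ^ e + X : ℝ[X]).map (algebraMap ℝ ℂ)).roots = 0 ::ₘ nthRoots (e - 1) (-(-1) ^ e) := by
  rw [map_neg_X_pow_add_X (by omega), roots_C_mul _ (by simp),
    roots_mul (mul_ne_zero X_ne_zero (X_pow_sub_C_ne_zero (by omega) _)), roots_X]
  rfl

lemma argCount_neg_X_pow_add_X {e : ℕ} (he : 2 ≤ e) (t : ℝ) :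
    argCount t ((-X) ^ e + X) = expCount (2 * π * ((e - 1 : ℕ) * t)) (-(-1) ^ e) := by
  rw [argCount_eq_sum_expCount, roots_map_neg_X_pow_add_X he, Multiset.map_cons,
    Multiset.sum_cons, expCount_zero, zero_add, sum_expCount_nthRoots (by omega) (by simp)]
  ring_nf

lemma argCount_neg_X_pow_add_X_of_even {e : ℕ} (he : Even e) (he2 : 2 ≤ e) {t : ℝ} (ht : 0 ≤ t) :
    (argCount t ((-X) ^ e + X) : ℤ) = ⌊(e - 1) * t + 1 / 2⌋ := by
  rw [argCount_neg_X_pow_add_X he2, he.neg_one_pow, expCount_neg_one (by positivity),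
    Nat.cast_sub (by omega), Nat.cast_one]

lemma argCount_neg_X_pow_add_X_of_odd {e : ℕ} (he : Odd e) (he2 : 2 ≤ e) {t : ℝ} (ht : 0 ≤ t) :
    (argCount t ((-X) ^ e + X) : ℤ) = ⌊(e - 1) * t⌋ := by
  rw [argCount_neg_X_pow_add_X he2, he.neg_one_pow, neg_neg, expCount_one (by positivity),
    Nat.cast_sub (by omega), Nat.cast_one]

lemma argCount_X_add_one {t : ℝ} (ht : 0 ≤ t) : (argCount t (X + 1) : ℤ) = ⌊t + 1 / 2⌋ := by
  have hmap : (X + 1 : ℝ[X]).map (algebraMap ℝ ℂ) = X - C (-1) := by simp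
  rw [argCount_eq_sum_expCount, hmap, roots_X_sub_C, Multiset.map_singleton,
    Multiset.sum_singleton, expCount_neg_one ht]

lemma rootMultiplicity_eq_one_of_not_isRoot_derivative {R : Type*} [CommRing R] [IsDomain R]
    {p : R[X]} {t : R} (hp : p ≠ 0) (h : p.IsRoot t) (h' : ¬(derivative p).IsRoot t) :
    p.rootMultiplicity t = 1 :=
  le_antisymm (not_lt.1 fun h1 => h' ((one_lt_rootMultiplicity_iff_isRoot hp).1 h1).2)
    ((rootMultiplicity_pos hp).2 h)

lemma natDegree_neg_X_pow_add_X {e : ℕ} (he : 2 ≤ e) : ((-X) ^ e + X : ℝ[X]).natDegree = e := by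
  rw [natDegree_add_eq_left_of_natDegree_lt] <;> simp [natDegree_neg]; omega

lemma neg_X_pow_add_X_ne_zero {e : ℕ} (he : 2 ≤ e) : ((-X) ^ e + X : ℝ[X]) ≠ 0 :=
  ne_zero_of_natDegree_gt (n := 0) (by rw [natDegree_neg_X_pow_add_X he]; omega)

lemma rootMultiplicity_zero_neg_X_pow_add_X {e : ℕ} (he : 2 ≤ e) :
    ((-X) ^ e + X : ℝ[X]).rootMultiplicity 0 = 1 := by
  refine rootMultiplicity_eq_one_of_not_isRoot_derivative (neg_X_pow_add_X_ne_zero he) ?_ ?_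
  · simp [zero_pow (by omega : e ≠ 0)]
  · simp [derivative_pow, zero_pow (by omega : e - 1 ≠ 0)]

lemma rootMultiplicity_one_neg_X_pow_add_X_of_even {e : ℕ} (he : Even e) :
    ((-X) ^ e + X : ℝ[X]).rootMultiplicity 1 = 0 :=
  rootMultiplicity_eq_zero (by simp [he.neg_pow])

lemma rootMultiplicity_one_neg_X_pow_add_X_of_odd {e : ℕ} (he : Odd e) (he2 : 2 ≤ e) :
    ((-X) ^ e + X : ℝ[X]).rootMultiplicity 1 = 1 := by
  refine rootMultiplicity_eq_one_of_not_isRoot_derivative (neg_X_pow_add_X_ne_zero he2) ?_ ?_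
  · simp [he.neg_pow]
  · simp [derivative_pow, (Nat.Odd.sub_odd he odd_one).neg_pow, neg_add_eq_zero]
    omega

section Floor

variable {K : Type*} [Field K] [LinearOrder K] [IsStrictOrderedRing K] [FloorRing K]

lemma Int.floor_intCast_sub_of_notMem (n : ℤ) {x : K} (hx : x ∉ Set.range ((↑) : ℤ → K)) :
    ⌊(n : K) - x⌋ = n - ⌊x⌋ - 1 := by
  rw [sub_eq_add_neg, Int.floor_intCast_add, Int.floor_neg,
    (Int.ceil_eq_floor_add_one_iff_notMem x).2 hx]
  ring

lemma Int.floor_two_mul_eq_floor_add_floor_add_half (x : K) : ⌊2 * x⌋ = ⌊x⌋ + ⌊x + 1 / 2⌋ := by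
  have h₀ := Int.floor_le x
  have h₁ := Int.lt_floor_add_one x
  rcases lt_or_ge (x - ⌊x⌋) (1 / 2) with h | h
  · rw [Int.floor_eq_iff.2 (⟨by linarith, by linarith⟩ : (⌊x⌋ : K) ≤ x + 1 / 2 ∧ _),
      Int.floor_eq_iff.2 (⟨by push_cast; linarith, by push_cast; linarith⟩ :
        ((⌊x⌋ + ⌊x⌋ : ℤ) : K) ≤ 2 * x ∧ _)]
  · rw [Int.floor_eq_iff.2 (⟨by push_cast; linarith, by push_cast; linarith⟩ :
        ((⌊x⌋ + 1 : ℤ) : K) ≤ x + 1 / 2 ∧ _),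
      Int.floor_eq_iff.2 (⟨by push_cast; linarith, by push_cast; linarith⟩ :
        ((⌊x⌋ + (⌊x⌋ + 1) : ℤ) : K) ≤ 2 * x ∧ _)]

lemma Int.floor_add_half_le_two_mul {x : K} (hx : 0 ≤ x) : (⌊x + 1 / 2⌋ : K) ≤ 2 * x := by
  rcases lt_or_ge x (1 / 2) with h | h
  · rw [Int.floor_eq_zero_iff.2 ⟨by linarith, by linarith⟩]
    simpa using hx
  · linarith [Int.floor_le (x + 1 / 2)]

end Floor

lemma two_mul_floor_div_two_of_odd {n : ℕ} (hn : Odd n) : 2 * (⌊(n : ℚ) / 2⌋ : ℚ) = n - 1 := by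
  have h := Nat.two_mul_div_two_add_one_of_odd hn
  rw [show ((2 : ℚ)) = ((2 : ℕ) : ℚ) by norm_num, Rat.floor_natCast_div_natCast]
  push_cast
  rify at h ⊢
  linarith

lemma piFn_X_add_one (κ d : ℕ) :
    piFn κ d (X + 1) = (κ : ℚ) / d + ⌊(κ : ℚ) / d + 1 / 2⌋ := by
  have hA : (argCount ((κ : ℝ) / d) (X + 1) : ℤ) = ⌊(κ : ℚ) / d + 1 / 2⌋ := by
    rw [argCount_X_add_one (by positivity), ← Rat.floor_cast (α := ℝ) ((κ : ℚ) / d + 1 / 2)]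
    push_cast
    rfl
  have h0 : (X + 1 : ℝ[X]).rootMultiplicity 0 = 0 := rootMultiplicity_eq_zero (by simp)
  have h1 : (X + 1 : ℝ[X]).rootMultiplicity 1 = 0 := rootMultiplicity_eq_zero (by norm_num)
  rw [piFn, h0, h1, ← C_1, natDegree_X_add_C, C_1, ← hA]
  push_cast
  ring

lemma piFn_neg_X_pow_add_X_of_even (κ d : ℕ) {e : ℕ} (he : Even e) (he2 : 2 ≤ e) :
    piFn κ d ((-X) ^ e + X) = (1 + e) * ((κ : ℚ) / d) + ⌊(e - 1) * ((κ : ℚ) / d) + 1 / 2⌋ := by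
  have hA : (argCount ((κ : ℝ) / d) ((-X) ^ e + X) : ℤ) = ⌊(e - 1) * ((κ : ℚ) / d) + 1 / 2⌋ := by
    rw [argCount_neg_X_pow_add_X_of_even he he2 (by positivity),
      ← Rat.floor_cast (α := ℝ) ((e - 1) * ((κ : ℚ) / d) + 1 / 2)]
    push_cast
    rfl
  rw [piFn, rootMultiplicity_zero_neg_X_pow_add_X he2, natDegree_neg_X_pow_add_X he2,
    rootMultiplicity_one_neg_X_pow_add_X_of_even he, ← hA]
  push_cast
  ring

lemma piFn_neg_X_pow_add_X_of_odd (κ d : ℕ) {e : ℕ} (he : Odd e) (he2 : 2 ≤ e) :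
    piFn κ d ((-X) ^ e + X) = (1 + e) * ((κ : ℚ) / d) + ⌊(e - 1) * ((κ : ℚ) / d)⌋ + 1 / 2 := by
  have hA : (argCount ((κ : ℝ) / d) ((-X) ^ e + X) : ℤ) = ⌊(e - 1) * ((κ : ℚ) / d)⌋ := by
    rw [argCount_neg_X_pow_add_X_of_odd he he2 (by positivity),
      ← Rat.floor_cast (α := ℝ) ((e - 1) * ((κ : ℚ) / d))]
    push_cast
    rfl
  rw [piFn, rootMultiplicity_zero_neg_X_pow_add_X he2, natDegree_neg_X_pow_add_X he2,
    rootMultiplicity_one_neg_X_pow_add_X_of_odd he he2, ← hA]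
  push_cast
  ring

lemma piFn_neg_X_pow_add_X (κ d : ℕ) {e : ℕ} (he : 2 ≤ e) {m : ℤ}
    (hm : e * ((κ : ℚ) / d - 1 / 2) = m)
    (hx : (κ : ℚ) / d + 1 / 2 ∉ Set.range ((↑) : ℤ → ℚ)) :
    piFn κ d ((-X) ^ e + X) = (1 + 2 * e) * ((κ : ℚ) / d) - ⌊(κ : ℚ) / d + 1 / 2⌋ := by
  rcases Nat.even_or_odd' e with ⟨k, rfl | rfl⟩ <;> push_cast at hm
  · rw [piFn_neg_X_pow_add_X_of_even κ d (even_two_mul k) he,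
      show ((2 * k : ℕ) - 1) * ((κ : ℚ) / d) + 1 / 2 = ((m + k + 1 : ℤ) : ℚ) - ((κ : ℚ) / d + 1 / 2)
        by push_cast; linear_combination hm,
      Int.floor_intCast_sub_of_notMem _ hx]
    push_cast
    linear_combination (-1 : ℚ) * hm
  · rw [piFn_neg_X_pow_add_X_of_odd κ d (odd_two_mul_add_one k) he,
      show ((2 * k + 1 : ℕ) - 1) * ((κ : ℚ) / d) = ((m + k + 1 : ℤ) : ℚ) - ((κ : ℚ) / d + 1 / 2)
        by push_cast; linear_combination hm,
      Int.floor_intCast_sub_of_notMem _ hx]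
    push_cast
    linear_combination (-1 : ℚ) * hm

lemma exists_intCast_eq_mul_div_sub_half {κ d e : ℕ} (hd : d ≠ 0) (hcop : κ.Coprime d)
    (he : (4 ∣ d ∧ e = d) ∨ (d % 2 = 1 ∧ e = 2 * d) ∨ (d % 4 = 2 ∧ 2 * e = d)) :
    ∃ m : ℤ, e * ((κ : ℚ) / d - 1 / 2) = m := by
  have hd' : (d : ℚ) ≠ 0 := by exact_mod_cast hd
  rcases he with ⟨⟨j, rfl⟩, rfl⟩ | ⟨-, rfl⟩ | ⟨h2, rfl⟩
  · exact ⟨κ - 2 * j, by field_simp; push_cast; ring⟩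
  · exact ⟨2 * κ - d, by field_simp; push_cast; ring⟩
  · have hκ : ¬2 ∣ κ := fun h => by
      have := Nat.dvd_gcd h (dvd_mul_right 2 e)
      rw [hcop.gcd_eq_one] at this
      omega
    obtain ⟨a, rfl⟩ : ∃ a, κ = 2 * a + 1 := ⟨κ / 2, by omega⟩
    obtain ⟨b, rfl⟩ : ∃ b, e = 2 * b + 1 := ⟨e / 2, by omega⟩
    exact ⟨a - b, by field_simp; push_cast; ring⟩

lemma div_add_half_notMem_range_intCast {κ d : ℕ} (hd : 3 ≤ d) (hcop : κ.Coprime d) :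
    (κ : ℚ) / d + 1 / 2 ∉ Set.range ((↑) : ℤ → ℚ) := by
  rintro ⟨n, hn⟩
  have hdq : (d : ℚ) ≠ 0 := by positivity
  have hq : ((2 * κ : ℕ) : ℚ) = (2 * n - 1) * d := by
    field_simp at hn
    push_cast
    linear_combination (-1 : ℚ) * hn
  have hz : ((2 * κ : ℕ) : ℤ) = (2 * n - 1) * d := by exact_mod_cast hq
  have hdvd : d ∣ 2 * κ := Int.natCast_dvd_natCast.1 ⟨2 * n - 1, by rw [hz]; ring⟩
  have := Nat.le_of_dvd two_pos (hcop.symm.dvd_of_dvd_mul_right hdvd)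
  omega

/-- Proposition 8.3, second equation: for `d ≥ 3`, with `e = d` if `4 ∣ d`, `e = 2d` if `d` is
odd, and `e = d/2` if `d ≡ 2 (mod 4)`,
`π_{κ/d}((−q)^e + q) − π_{κ/d}(q + 1) = 2κe/d − 2⌊2κ/d⌋ + 2⌊κ/d⌋`, and this quantity is
positive.  (For `d = 2`, where `e = 1`, and `κ` odd, the quantity
`2κe/d − 2⌊2κ/d⌋ + 2⌊κ/d⌋` equals `−1`.) -/
theorem piFn_shift_unitary' (κ d : ℕ) (hd : 3 ≤ d) (hκ : 1 ≤ κ) (hcop : Nat.Coprime κ d)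
    (e : ℕ)
    (he : (4 ∣ d ∧ e = d) ∨ (d % 2 = 1 ∧ e = 2 * d) ∨ (d % 4 = 2 ∧ 2 * e = d)) :
    (piFn κ d ((-X) ^ e + X) - piFn κ d (X + 1) =
      2 * (κ : ℚ) * (e : ℚ) / (d : ℚ) - 2 * (⌊2 * (κ : ℚ) / (d : ℚ)⌋ : ℚ)
        + 2 * (⌊(κ : ℚ) / (d : ℚ)⌋ : ℚ) ∧
    0 < 2 * (κ : ℚ) * (e : ℚ) / (d : ℚ) - 2 * (⌊2 * (κ : ℚ) / (d : ℚ)⌋ : ℚ)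
        + 2 * (⌊(κ : ℚ) / (d : ℚ)⌋ : ℚ)) ∧
    (∀ κ' : ℕ, Odd κ' →
      2 * (κ' : ℚ) * (1 : ℚ) / (2 : ℚ) - 2 * (⌊2 * (κ' : ℚ) / (2 : ℚ)⌋ : ℚ)
        + 2 * (⌊(κ' : ℚ) / (2 : ℚ)⌋ : ℚ) = -1) := by
  have he3 : (3 : ℚ) ≤ e := by exact_mod_cast (by omega : 3 ≤ e)
  have ht : (0 : ℚ) < κ / d := by positivity
  obtain ⟨m, hm⟩ := exists_intCast_eq_mul_div_sub_half (by omega) hcop he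
  rw [piFn_neg_X_pow_add_X κ d (by omega) hm (div_add_half_notMem_range_intCast hd hcop),
    piFn_X_add_one, show 2 * (κ : ℚ) * e / d = 2 * e * (κ / d) by ring, mul_div_assoc,
    Int.floor_two_mul_eq_floor_add_floor_add_half]
  refine ⟨⟨by push_cast; ring, ?_⟩, fun κ' hκ' => ?_⟩
  · have := Int.floor_add_half_le_two_mul ht.le
    push_cast
    nlinarith
  · rw [mul_one, mul_div_cancel_left₀ _ two_ne_zero, Int.floor_natCast,
      two_mul_floor_div_two_of_odd hκ']
    push_cast
    ring
end
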